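/- arXiv:2601.20851 — 7 statements merged into one kernel-verified Lean document; each statement's English description precedes it below -/
import Mathlib

section
/- Let d ≥ 2 be an integer and let u, v be real numbers with v ≥ u > 0. Then lim_{n→∞} dim V(u·n, v·n) / n^d = −((d−1)/d!)·u^d + (1/(d−1)!)·v·u^{d−1}, where dim V(u·n, v·n) equals the number of lattice points α ∈ ℤ_{≥0}^d with α_1+⋯+α_{d−1} < u·n and |α| < v·n. -/
/-!
Splitting off the last coordinate, the exponents of `V(r, s)` with `r ≤ s` number
`(s - r) P_{d-1}(r) + P_d(r)`, where `P_k(r) = #{β ∈ ℕ^k : |β| < r} = (r - 1 + k).choose k`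
by double counting and the hockey-stick identity. For `r = ⌈un⌉`, `s = ⌈vn⌉` we have
`P_k(r) ~ (un)^k / k!`, so the normalised count tends to `(v - u) u^{d-1}/(d-1)! + u^d/d!`,
which is the stated constant.
-/

open Finset Filter Topology Asymptotics
open scoped Nat

def simplexPoints (k a : ℕ) : Finset (Fin k → ℕ) :=
  {β ∈ Fintype.piFinset fun _ => range a | ∑ i, β i < a}

theorem mem_simplexPoints {k a : ℕ} {β : Fin k → ℕ} : β ∈ simplexPoints k a ↔ ∑ i, β i < a := by
  simp only [simplexPoints, mem_filter, Fintype.mem_piFinset, mem_range, and_iff_right_iff_imp]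
  exact fun h i => (single_le_sum (fun j _ => Nat.zero_le (β j)) (mem_univ i)).trans_lt h

theorem card_eq_sum_of_mem_iff_init_last {k : ℕ} {T : Finset (Fin (k + 1) → ℕ)}
    {s : Finset (Fin k → ℕ)} {g : (Fin k → ℕ) → ℕ}
    (hT : ∀ α, α ∈ T ↔ Fin.init α ∈ s ∧ α (Fin.last k) < g (Fin.init α)) :
    #T = ∑ β ∈ s, g β := by
  have hsigma : ∑ β ∈ s, g β = #(s.sigma fun β => range (g β)) := by simp [card_sigma]
  rw [hsigma]
  refine card_bij' (fun α _ => ⟨Fin.init α, α (Fin.last k)⟩) (fun p _ => Fin.snoc p.1 p.2)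
    ?_ ?_ ?_ ?_
  · intro α hα; simpa using (hT α).1 hα
  · rintro ⟨β, t⟩ hp
    rw [mem_sigma, mem_range] at hp
    simpa [hT] using hp
  · intro α _; simp
  · rintro ⟨β, t⟩ _; simp

theorem sum_eq_sum_init_add_last {k : ℕ} (α : Fin (k + 1) → ℕ) :
    ∑ i, α i = ∑ i, Fin.init α i + α (Fin.last k) :=
  Fin.sum_univ_castSucc α

theorem card_simplexPoints_succ_dim (k a : ℕ) :
    #(simplexPoints (k + 1) a) = ∑ β ∈ simplexPoints k a, (a - ∑ i, β i) := by
  refine card_eq_sum_of_mem_iff_init_last fun α => ?_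
  simp only [mem_simplexPoints, sum_eq_sum_init_add_last α]
  omega

theorem sum_sub_sum_eq_sum_card_simplexPoints (k a : ℕ) :
    ∑ β ∈ simplexPoints k a, (a - ∑ i, β i) = ∑ t ∈ range a, #(simplexPoints k (a - t)) := by
  let r : (Fin k → ℕ) → ℕ → Prop := fun β t => ∑ i, β i + t < a
  have hcol : ∀ β ∈ simplexPoints k a, a - ∑ i, β i = #((range a).bipartiteAbove r β) := by
    intro β _
    rw [bipartiteAbove, ← card_range (a - ∑ i, β i)]
    congr 1; ext t; simp only [r, mem_filter, mem_range]; omega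
  have hrow : ∀ t ∈ range a,
      #((simplexPoints k a).bipartiteBelow r t) = #(simplexPoints k (a - t)) := by
    intro t _
    congr 1; ext β; simp only [r, bipartiteBelow, mem_filter, mem_simplexPoints]; omega
  rw [sum_congr rfl hcol, sum_card_bipartiteAbove_eq_sum_card_bipartiteBelow, sum_congr rfl hrow]

theorem card_simplexPoints_succ (k a : ℕ) : #(simplexPoints k (a + 1)) = (a + k).choose k := by
  induction k generalizing a with
  | zero => simp [simplexPoints]
  | succ k ih =>
    rw [card_simplexPoints_succ_dim, sum_sub_sum_eq_sum_card_simplexPoints]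
    calc ∑ t ∈ range (a + 1), #(simplexPoints k (a + 1 - t))
        = ∑ t ∈ range (a + 1), (a - t + k).choose k := by
          refine sum_congr rfl fun t ht => ?_
          rw [mem_range] at ht
          rw [← ih, Nat.sub_add_comm (Nat.lt_succ_iff.mp ht)]
      _ = ∑ t ∈ range (a + 1), (t + k).choose k := sum_range_reflect (fun t => (t + k).choose k) _
      _ = (a + (k + 1)).choose (k + 1) := by rw [Nat.sum_range_add_choose]; ring_nf

/-- The exponents of the monomials spanning `V(r, s)` in `k + 1` variables. -/
def exponentsV (k r s : ℕ) : Finset (Fin (k + 1) → ℕ) :=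
  {α ∈ simplexPoints (k + 1) s | ∑ i, Fin.init α i < r}

theorem card_exponentsV (k r s : ℕ) :
    #(exponentsV k r s) = ∑ β ∈ simplexPoints k r, (s - ∑ i, β i) := by
  refine card_eq_sum_of_mem_iff_init_last fun α => ?_
  simp only [exponentsV, mem_filter, mem_simplexPoints, sum_eq_sum_init_add_last α]
  omega

theorem card_exponentsV_of_le (k : ℕ) {r s : ℕ} (hrs : r ≤ s) :
    #(exponentsV k r s) = (s - r) * #(simplexPoints k r) + #(simplexPoints (k + 1) r) := by
  have hsplit : ∀ β ∈ simplexPoints k r, s - ∑ i, β i = (s - r) + (r - ∑ i, β i) := by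
    intro β hβ
    rw [mem_simplexPoints] at hβ
    omega
  rw [card_exponentsV, sum_congr rfl hsplit, sum_add_distrib, sum_const, smul_eq_mul, mul_comm,
    card_simplexPoints_succ_dim]

theorem sum_filter_lt_eq_sum_init {k : ℕ} (α : Fin (k + 1) → ℕ) :
    ∑ i ∈ univ.filter fun i : Fin (k + 1) => (i : ℕ) < k, α i = ∑ i, Fin.init α i := by
  rw [sum_filter, Fin.sum_univ_castSucc]
  simp [Fin.init]

theorem ncard_eq_card_exponentsV (k : ℕ) (x y : ℝ) :
    {α : Fin (k + 1) →₀ ℕ |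
        ((∑ i ∈ univ.filter fun i : Fin (k + 1) => (i : ℕ) < k + 1 - 1, α i : ℕ) : ℝ) < x ∧
        ((∑ i, α i : ℕ) : ℝ) < y}.ncard = #(exponentsV k ⌈x⌉₊ ⌈y⌉₊) := by
  rw [← Set.ncard_coe_finset, ← Set.ncard_image_of_injective _ Finsupp.equivFunOnFinite.injective,
    Equiv.image_eq_preimage_symm]
  congr 1
  ext α
  simp only [Set.mem_preimage, Set.mem_ofPred_eq, mem_coe, exponentsV, mem_filter,
    mem_simplexPoints, Nat.add_sub_cancel, Finsupp.coe_equivFunOnFinite_symm,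
    sum_filter_lt_eq_sum_init, Nat.lt_ceil]
  exact and_comm

theorem tendsto_div_natCast_of_abs_sub_le {f g : ℕ → ℝ} {u C : ℝ}
    (hf : Tendsto (fun n => f n / n) atTop (𝓝 u)) (hfg : ∀ᶠ n in atTop, |g n - f n| ≤ C) :
    Tendsto (fun n => g n / n) atTop (𝓝 u) := by
  have hdiff : Tendsto (fun n => (g n - f n) / n) atTop (𝓝 0) := by
    refine squeeze_zero_norm' ?_ (tendsto_const_div_atTop_nhds_zero_nat C)
    filter_upwards [hfg] with n hn
    rw [norm_div, Real.norm_natCast, Real.norm_eq_abs]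
    exact div_le_div_of_nonneg_right hn n.cast_nonneg
  simpa [sub_div] using hf.add hdiff

theorem tendsto_natCeil_mul_div {u : ℝ} (hu : 0 ≤ u) :
    Tendsto (fun n : ℕ => (⌈u * n⌉₊ : ℝ) / n) atTop (𝓝 u) := by
  have hlin : Tendsto (fun n : ℕ => u * n / n) atTop (𝓝 u) := by
    refine tendsto_const_nhds.congr' ?_
    filter_upwards [eventually_ne_atTop 0] with n hn
    field_simp
  refine tendsto_div_natCast_of_abs_sub_le hlin (C := 1) (Eventually.of_forall fun n => ?_)
  have hx : 0 ≤ u * n := by positivity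
  rw [abs_le]
  constructor <;> linarith [Nat.le_ceil (u * n), Nat.ceil_lt_add_one hx]

theorem tendsto_card_simplexPoints_div_pow (k : ℕ) {f : ℕ → ℕ} {u : ℝ} (hu : 0 < u)
    (hf : Tendsto (fun n => (f n : ℝ) / n) atTop (𝓝 u)) :
    Tendsto (fun n => (#(simplexPoints k (f n)) : ℝ) / n ^ k) atTop (𝓝 (u ^ k / k !)) := by
  have hf_pos : ∀ᶠ n in atTop, 1 ≤ f n := by
    filter_upwards [hf.eventually (lt_mem_nhds hu)] with n hn
    by_contra! h
    simp [Nat.lt_one_iff.mp h] at hn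
  set g : ℕ → ℕ := fun n => f n - 1 + k
  have hg : Tendsto (fun n => (g n : ℝ) / n) atTop (𝓝 u) := by
    refine tendsto_div_natCast_of_abs_sub_le hf (C := k + 1) ?_
    filter_upwards [hf_pos] with n hn
    rw [Nat.cast_add, Nat.cast_sub hn, Nat.cast_one, abs_le]
    constructor <;> linarith [(k.cast_nonneg : (0 : ℝ) ≤ k)]
  have hg_top : Tendsto g atTop atTop :=
    tendsto_natCast_atTop_iff.mp (tendsto_natCast_atTop_atTop.num hu hg)
  have hequiv := ((isEquivalent_choose k).comp_tendsto hg_top).div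
    (IsEquivalent.refl (u := fun n : ℕ => (n : ℝ) ^ k))
  have hlim : Tendsto (fun n => (g n : ℝ) ^ k / k ! / n ^ k) atTop (𝓝 (u ^ k / k !)) := by
    refine ((hg.pow k).div_const (k ! : ℝ)).congr fun n => ?_
    rw [div_pow]
    ring
  refine (hequiv.symm.tendsto_nhds hlim).congr' ?_
  filter_upwards [hf_pos] with n hn
  rw [← Nat.sub_add_cancel hn, card_simplexPoints_succ]
  rfl

/-- Let `d ≥ 2` and `v ≥ u > 0` be reals. Then
`dim V(un, vn) / n^d → -((d-1)/d!) u^d + (1/(d-1)!) v u^{d-1}` as `n → ∞`, where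
`dim V(un, vn)` is the number of lattice points `α ∈ ℤ_{≥0}^d` with
`α_1 + ⋯ + α_{d-1} < u n` and `|α| < v n`. -/
theorem dimV_asymptotics (d : ℕ) (hd : 2 ≤ d) (u v : ℝ) (hu : 0 < u) (huv : u ≤ v) :
    Filter.Tendsto
      (fun n : ℕ =>
        (Set.ncard {α : Fin d →₀ ℕ |
            ((∑ i ∈ Finset.univ.filter fun i : Fin d => (i : ℕ) < d - 1, α i : ℕ) : ℝ) <
              u * (n : ℝ) ∧
            ((∑ i, α i : ℕ) : ℝ) < v * (n : ℝ)} : ℝ) / (n : ℝ) ^ d)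
      Filter.atTop
      (nhds (-(((d : ℝ) - 1) / (Nat.factorial d : ℝ)) * u ^ d +
        (1 / (Nat.factorial (d - 1) : ℝ)) * v * u ^ (d - 1))) := by
  obtain ⟨k, rfl⟩ : ∃ k, d = k + 1 := ⟨d - 1, by omega⟩
  have hceil_le : ∀ n : ℕ, ⌈u * n⌉₊ ≤ ⌈v * n⌉₊ := fun n => Nat.ceil_le_ceil (by gcongr)
  have hu_lim := tendsto_natCeil_mul_div hu.le
  have hgap : Tendsto (fun n : ℕ => ((⌈v * n⌉₊ - ⌈u * n⌉₊ : ℕ) : ℝ) / n) atTop (𝓝 (v - u)) :=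
    ((tendsto_natCeil_mul_div (hu.le.trans huv)).sub hu_lim).congr fun n => by
      rw [Nat.cast_sub (hceil_le n), sub_div]
  have hlim := (hgap.mul (tendsto_card_simplexPoints_div_pow k hu hu_lim)).add
    (tendsto_card_simplexPoints_div_pow (k + 1) hu hu_lim)
  convert hlim.congr' ?_ using 2
  · rw [Nat.add_sub_cancel, Nat.factorial_succ]
    push_cast
    field_simp
    ring
  · filter_upwards [eventually_ne_atTop 0] with n hn
    rw [ncard_eq_card_exponentsV, card_exponentsV_of_le k (hceil_le n)]
    push_cast
    field_simp
    ring
end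

section
/- Let F be a field, r ≥ 1 and k ≥ 1 integers, and let {p_1,…,p_k} ⊆ F^r be an algebraically spread set of points. Then for every field extension F' of F, the set {p_1,…,p_k}, viewed inside (F')^r, is algebraically spread (with polynomials now taken over F'). -/
/-- The Hasse derivative `H^α f`: the coefficient of `y^α` in `f(x+y)`. -/
noncomputable def mvHasseDeriv {F : Type*} [CommSemiring F] {d : ℕ}
    (α : Fin d →₀ ℕ) (f : MvPolynomial (Fin d) F) : MvPolynomial (Fin d) F :=
  MvPolynomial.coeff α
    (MvPolynomial.eval₂ (MvPolynomial.C.comp MvPolynomial.C)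
      (fun i => MvPolynomial.X i + MvPolynomial.C (MvPolynomial.X i)) f)

/-- `mult(f,p) ≥ n`: all Hasse derivatives of order `< n` vanish at `p`. -/
def MultGE {F : Type*} [CommSemiring F] {d : ℕ}
    (f : MvPolynomial (Fin d) F) (p : Fin d → F) (n : ℕ) : Prop :=
  ∀ α : Fin d →₀ ℕ, (∑ i, α i) < n → MvPolynomial.eval p (mvHasseDeriv α f) = 0

/-- A finite point set `P ⊆ F^r` is algebraically spread. -/
def AlgebraicallySpread (F : Type*) [Field F] (r : ℕ) (P : Set (Fin r → F)) : Prop :=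
  P.Finite ∧ ∀ ε : ℝ, 0 < ε → ∃ n₀ : ℕ, ∀ n : ℕ, n₀ < n →
    ∀ f : MvPolynomial (Fin r) F,
      (f.totalDegree : ℝ) < (1 - ε) * (P.ncard : ℝ) ^ ((1:ℝ)/(r:ℝ)) * (n:ℝ) →
      (∀ p ∈ P, MultGE f p n) → f = 0

open MvPolynomial

section Aux

variable {F F' : Type*} [CommSemiring F] [CommSemiring F'] {d : ℕ}

lemma mvHasseDeriv_sum (α : Fin d →₀ ℕ) {ι : Type*} (s : Finset ι)
    (g : ι → MvPolynomial (Fin d) F) :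
    mvHasseDeriv α (∑ i ∈ s, g i) = ∑ i ∈ s, mvHasseDeriv α (g i) := by
  unfold mvHasseDeriv
  rw [← coeff_sum]
  congr 1
  simp [← coe_eval₂Hom, map_sum]

lemma mvHasseDeriv_C_mul (α : Fin d →₀ ℕ) (b : F) (g : MvPolynomial (Fin d) F) :
    mvHasseDeriv α (MvPolynomial.C b * g) = MvPolynomial.C b * mvHasseDeriv α g := by
  unfold mvHasseDeriv
  rw [← coe_eval₂Hom, map_mul, coe_eval₂Hom, eval₂_C]
  simp [coeff_C_mul]

lemma mvHasseDeriv_map (φ : F →+* F') (α : Fin d →₀ ℕ) (g : MvPolynomial (Fin d) F) :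
    mvHasseDeriv α (MvPolynomial.map φ g) = MvPolynomial.map φ (mvHasseDeriv α g) := by
  unfold mvHasseDeriv
  rw [eval₂_map, ← coeff_map]
  congr 1
  rw [eval₂_comp_left (MvPolynomial.map (MvPolynomial.map φ))]
  congr 1
  · ext a : 1
    simp
  · funext i
    simp

lemma eval_map_algebraMap (φ : F →+* F') (p : Fin d → F) (g : MvPolynomial (Fin d) F) :
    MvPolynomial.eval (fun i => φ (p i)) (MvPolynomial.map φ g) = φ (MvPolynomial.eval p g) := by
  rw [eval_map]
  have h := eval₂_comp_left φ (RingHom.id F) p g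
  rw [eval₂_id, RingHom.comp_id] at h
  exact h.symm

/-- Apply a linear functional to each coefficient of a polynomial. -/
noncomputable def coeffProj [Module F F'] (ℓ : F' →ₗ[F] F) (f : MvPolynomial (Fin d) F') :
    MvPolynomial (Fin d) F :=
  ∑ m ∈ f.support, MvPolynomial.monomial m (ℓ (f.coeff m))

lemma coeffProj_coeff [Module F F'] (ℓ : F' →ₗ[F] F) (f : MvPolynomial (Fin d) F')
    (m : Fin d →₀ ℕ) : (coeffProj ℓ f).coeff m = ℓ (f.coeff m) := by
  unfold coeffProj
  rw [coeff_sum]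
  by_cases hm : m ∈ f.support
  · rw [Finset.sum_eq_single m]
    · simp
    · intro b _ hb; simp [coeff_monomial, hb]
    · intro h; exact absurd hm h
  · rw [Finset.sum_eq_zero]
    · rw [MvPolynomial.notMem_support_iff.mp hm, map_zero]
    · intro b hb
      rw [coeff_monomial, if_neg]
      rintro rfl; exact hm hb

lemma coeffProj_totalDegree [Module F F'] (ℓ : F' →ₗ[F] F) (f : MvPolynomial (Fin d) F') :
    (coeffProj ℓ f).totalDegree ≤ f.totalDegree := by
  apply Finset.sup_mono
  intro m hm
  rw [MvPolynomial.mem_support_iff] at hm ⊢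
  rw [coeffProj_coeff] at hm
  intro h; rw [h, map_zero] at hm; exact hm rfl

end Aux

section Decomp

variable {F F' : Type*} [Field F] [Field F'] [Algebra F F'] {d : ℕ}

lemma basis_decomp (f : MvPolynomial (Fin d) F')
    (S : Finset (Module.Basis.ofVectorSpaceIndex F F'))
    (hS : ∀ m ∈ f.support, ((Module.Basis.ofVectorSpace F F').repr (f.coeff m)).support ⊆ S) :
    f = ∑ i ∈ S, (Module.Basis.ofVectorSpace F F') i •
          MvPolynomial.map (algebraMap F F')
            (coeffProj ((Module.Basis.ofVectorSpace F F').coord i) f) := by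
  set B := Module.Basis.ofVectorSpace F F'
  ext m
  rw [coeff_sum]
  have hterm : ∀ i, (B i • MvPolynomial.map (algebraMap F F') (coeffProj (B.coord i) f)).coeff m
      = (B.repr (f.coeff m)) i • B i := by
    intro i
    rw [coeff_smul, coeff_map, coeffProj_coeff, Module.Basis.coord_apply, smul_eq_mul,
      Algebra.smul_def, mul_comm]
  simp only [hterm]
  have h := B.linearCombination_repr (f.coeff m)
  rw [Finsupp.linearCombination_apply, Finsupp.sum] at h
  conv_lhs => rw [← h]
  apply Finset.sum_subset
  · by_cases hm : m ∈ f.support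
    · exact hS m hm
    · rw [MvPolynomial.notMem_support_iff.mp hm, map_zero]
      simp
  · intro i _ hi
    rw [Finsupp.notMem_support_iff.mp hi, zero_smul]

end Decomp

/-- An algebraically spread set of `k` points in `F^r` remains algebraically spread when viewed
inside `(F')^r`, for any field extension `F'` of `F`. -/
theorem algebraicallySpread_of_fieldExtension
    (F : Type) [Field F] (F' : Type) [Field F'] [Algebra F F']
    (r k : ℕ) (hr : 1 ≤ r) (hk : 1 ≤ k)
    (P : Set (Fin r → F)) (hPfin : P.Finite) (hPcard : P.ncard = k)
    (hspread : AlgebraicallySpread F r P) :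
    AlgebraicallySpread F' r ((fun p => fun i => algebraMap F F' (p i)) '' P) := by
  classical
  obtain ⟨hfin, hsp⟩ := hspread
  constructor
  · exact hPfin.image _
  intro ε hε
  obtain ⟨n₀, hn₀⟩ := hsp ε hε
  refine ⟨n₀, fun n hn f hdeg hmult => ?_⟩
  have hinj : Function.Injective (fun p : Fin r → F => fun i => algebraMap F F' (p i)) := by
    intro p q h
    funext i
    exact (algebraMap F F').injective (congrFun h i)
  have hcard : ((fun p => fun i => algebraMap F F' (p i)) '' P).ncard = P.ncard :=
    Set.ncard_image_of_injective P hinj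
  rw [hcard] at hdeg
  set B := Module.Basis.ofVectorSpace F F' with hB
  set S : Finset (Module.Basis.ofVectorSpaceIndex F F') :=
    f.support.biUnion (fun m => (B.repr (f.coeff m)).support) with hSdef
  have hS : ∀ m ∈ f.support, (B.repr (f.coeff m)).support ⊆ S := by
    intro m hm
    rw [hSdef]
    exact Finset.subset_biUnion_of_mem (fun m => (B.repr (f.coeff m)).support) hm
  have hdecomp := basis_decomp f S hS
  have hzero : ∀ i ∈ S, coeffProj (B.coord i) f = 0 := by
    intro i hi
    apply hn₀ n hn
    · calc ((coeffProj (B.coord i) f).totalDegree : ℝ)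
          ≤ (f.totalDegree : ℝ) := by exact_mod_cast coeffProj_totalDegree _ _
        _ < _ := hdeg
    · intro p hp α hα
      have hm := hmult _ (Set.mem_image_of_mem _ hp) α hα
      rw [hdecomp, mvHasseDeriv_sum, map_sum] at hm
      have hterm : ∀ j ∈ S,
          MvPolynomial.eval (fun i => algebraMap F F' (p i))
            (mvHasseDeriv α (B j • MvPolynomial.map (algebraMap F F')
              (coeffProj (B.coord j) f)))
          = (MvPolynomial.eval p (mvHasseDeriv α (coeffProj (B.coord j) f))) • B j := by
        intro j _
        rw [smul_eq_C_mul, mvHasseDeriv_C_mul, mvHasseDeriv_map, map_mul, eval_C,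
          eval_map_algebraMap, Algebra.smul_def, mul_comm]
      rw [Finset.sum_congr rfl hterm] at hm
      exact linearIndependent_iff'.mp B.linearIndependent S _ hm i hi
  rw [hdecomp]
  apply Finset.sum_eq_zero
  intro i hi
  rw [hzero i hi, map_zero, smul_zero]
end

section
/- Let F be an uncountable field, and let r ≥ 1 and k ≥ 1 be integers such that there exists at least one algebraically spread set of k points in F^r. Then there exists a countable family of proper Zariski-closed subsets of (F^r)^k such that every k-tuple (p_1,…,p_k) ∈ (F^r)^k avoiding all of them consists of k distinct points forming an algebraically spread set; that is, a very generic set of k points in F^r is algebraically spread. -/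
/-- A Zariski-closed subset of the affine space `F^ι`: the common zero locus of a set of
polynomials. -/
def ZarClosed {F : Type*} [CommSemiring F] {ι : Type*} (Z : Set (ι → F)) : Prop :=
  ∃ S : Set (MvPolynomial ι F), Z = {x | ∀ g ∈ S, MvPolynomial.eval x g = 0}


/-! For fixed `d` and `n`, the `k`-tuples through which some nonzero polynomial of degree `≤ d`
passes with multiplicity `≥ n` at every point form a Zariski-closed set: the multiplicity
conditions are linear in the coefficients of the polynomial, with coefficients polynomial in the
points, so the set is cut out by the maximal minors of a polynomial matrix. Take as the
countable family all such loci, together with the diagonals `p i = p j`, that miss the tuple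
enumerating the given spread set; each is then proper. A tuple avoiding them all is injective,
and for `n` large and `d < (1 - ε) k^{1/r} n` it lies outside the `(d, n)` locus just as the
spread tuple does, which is exactly the spread condition. -/

open MvPolynomial

section MaximalMinors

open Matrix

variable {F : Type*} [Field F] {m n : Type*} [Finite m] [Fintype n] [DecidableEq n]

theorem Matrix.exists_mulVec_eq_zero_iff_forall_det_submatrix_eq_zero (M : Matrix m n F) :
    (∃ v, v ≠ 0 ∧ M *ᵥ v = 0) ↔ ∀ σ : n ↪ m, (M.submatrix σ id).det = 0 := by
  refine ⟨fun ⟨v, hv, hMv⟩ σ => exists_mulVec_eq_zero_iff.mp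
    ⟨v, hv, _root_.funext fun j => congrFun hMv (σ j)⟩, fun hdet => ?_⟩
  by_contra! hker
  have hinj : Function.Injective M.mulVecLin :=
    LinearMap.ker_eq_bot.mp (ker_mulVecLin_eq_bot_iff.mpr fun v hv =>
      not_not.mp fun h => hker v h hv)
  obtain ⟨κ, a, ha, hspan, hli⟩ := exists_linearIndependent' F M.row
  have : Finite κ := Finite.of_injective a ha
  have : Fintype κ := Fintype.ofFinite κ
  have hcard : Fintype.card n = Fintype.card κ := by
    rw [← finrank_span_eq_card hli, hspan, ← rank_eq_finrank_span_row, rank,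
      LinearMap.finrank_range_of_inj hinj, Module.finrank_fintype_fun_eq_card]
  let e := Fintype.equivOfCardEq hcard
  have hrows : LinearIndependent F (M.submatrix (a ∘ e) id) := hli.comp e e.injective
  exact (isUnit_iff_isUnit_det _).mp (linearIndependent_rows_iff_isUnit.mp hrows)
    |>.ne_zero (hdet ⟨a ∘ e, ha.comp e.injective⟩)

end MaximalMinors

theorem zarClosed_setOf_exists_mulVec_eq_zero {F : Type*} [Field F] {ι m n : Type*} [Finite m]
    [Fintype n] [DecidableEq n] (M : Matrix m n (MvPolynomial ι F)) :
    ZarClosed {x | ∃ v, v ≠ 0 ∧ (M.map (eval x)).mulVec v = 0} := by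
  refine ⟨Set.range fun σ : n ↪ m => (M.submatrix σ id).det, Set.ext fun x => ?_⟩
  simp only [Set.mem_ofPred_eq, Matrix.exists_mulVec_eq_zero_iff_forall_det_submatrix_eq_zero,
    Set.forall_mem_range, RingHom.map_det, RingHom.mapMatrix_apply, Matrix.submatrix_map]

theorem zarClosed_empty {F ι : Type*} [CommSemiring F] [Nontrivial F] :
    ZarClosed (∅ : Set (ι → F)) :=
  ⟨{1}, by simp⟩

theorem zarClosed_setOf_forall_eq {F κ ι : Type*} [CommRing F] (i j : κ) :
    ZarClosed {x : κ × ι → F | ∀ l, x (i, l) = x (j, l)} :=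
  ⟨Set.range fun l => X (i, l) - X (j, l), by ext x; simp [sub_eq_zero]⟩

theorem exists_seq_zarClosed_ne_univ {F ι : Type*} [CommSemiring F] [Nontrivial F]
    (𝒞 : Set (Set (ι → F))) (h𝒞 : 𝒞.Countable) (hclosed : ∀ Z ∈ 𝒞, ZarClosed Z)
    (x₀ : ι → F) :
    ∃ Z : ℕ → Set (ι → F), (∀ i, ZarClosed (Z i) ∧ Z i ≠ Set.univ) ∧
      ∀ x, (∀ i, x ∉ Z i) → ∀ S ∈ 𝒞, x₀ ∉ S → x ∉ S := by
  obtain ⟨Z, hZ⟩ := ((h𝒞.mono (Set.sep_subset _ _)).insert ∅).exists_eq_range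
    (Set.insert_nonempty ∅ {S ∈ 𝒞 | x₀ ∉ S})
  refine ⟨Z, fun i => ?_, fun x hx S hS hx₀ => ?_⟩
  · obtain hZi | ⟨hZi, hx₀⟩ := hZ.ge (Set.mem_range_self i)
    · exact ⟨hZi ▸ zarClosed_empty, hZi ▸ Set.empty_ne_univ⟩
    · exact ⟨hclosed _ hZi, Set.ne_univ_iff_exists_notMem _ |>.mpr ⟨x₀, hx₀⟩⟩
  · obtain ⟨i, rfl⟩ := hZ.le (Set.mem_insert_of_mem _ ⟨hS, hx₀⟩)
    exact hx i

section Monomials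

variable {σ R : Type*} [CommSemiring R]

variable (σ) in
def exponentsBelow [Fintype σ] [DecidableEq σ] (n : ℕ) : Finset (σ →₀ ℕ) :=
  (Finset.range n).biUnion (Finset.finsuppAntidiag Finset.univ)

@[simp]
theorem mem_exponentsBelow [Fintype σ] [DecidableEq σ] {n : ℕ} {β : σ →₀ ℕ} :
    β ∈ exponentsBelow σ n ↔ ∑ i, β i < n := by
  simp [exponentsBelow]

theorem support_subset_exponentsBelow_iff [Fintype σ] [DecidableEq σ] {f : MvPolynomial σ R}
    {d : ℕ} : f.support ⊆ exponentsBelow σ (d + 1) ↔ f.totalDegree ≤ d := by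
  rw [totalDegree, Finset.sup_le_iff, Finset.subset_iff]
  refine forall₂_congr fun β _ => ?_
  rw [mem_exponentsBelow, Nat.lt_succ_iff, Finsupp.sum_fintype _ _ fun _ => rfl]

noncomputable def sumMonomials (s : Finset (σ →₀ ℕ)) : (s → R) →ₗ[R] MvPolynomial σ R :=
  Fintype.linearCombination R fun β : s => monomial (β : σ →₀ ℕ) 1

theorem coeff_sumMonomials [DecidableEq σ] (s : Finset (σ →₀ ℕ)) (c : s → R) (γ : σ →₀ ℕ) :
    coeff γ (sumMonomials s c) = if h : γ ∈ s then c ⟨γ, h⟩ else 0 := by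
  simp only [sumMonomials, Fintype.linearCombination_apply, Finset.univ_eq_attach, coeff_sum,
    coeff_smul, coeff_monomial, smul_eq_mul, mul_ite, mul_one, mul_zero]
  split_ifs with hγ
  · rw [Finset.sum_eq_single_of_mem ⟨γ, hγ⟩ (Finset.mem_attach _ _)]
    · exact if_pos rfl
    · exact fun β _ hβ => if_neg fun h => hβ (Subtype.ext h)
  · exact Finset.sum_eq_zero fun β _ =>
      if_neg fun (h : (β : σ →₀ ℕ) = γ) => hγ (h ▸ β.2)

theorem sumMonomials_coeff [DecidableEq σ] {s : Finset (σ →₀ ℕ)} {f : MvPolynomial σ R}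
    (hf : f.support ⊆ s) :
    sumMonomials s (fun β => coeff β f) = f := by
  ext γ
  rw [coeff_sumMonomials]
  split_ifs with hγ
  · rfl
  · exact (notMem_support_iff.mp fun h => hγ (hf h)).symm

theorem support_sumMonomials_subset [DecidableEq σ] (s : Finset (σ →₀ ℕ)) (c : s → R) :
    (sumMonomials s c).support ⊆ s := fun γ hγ => by
  by_contra h
  rw [mem_support_iff, coeff_sumMonomials, dif_neg h] at hγ
  exact hγ rfl

end Monomials

section HasseConditions

noncomputable def lmvHasseDeriv {F : Type*} [CommSemiring F] {d : ℕ} (α : Fin d →₀ ℕ) :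
    MvPolynomial (Fin d) F →ₗ[F] MvPolynomial (Fin d) F where
  toFun := mvHasseDeriv α
  map_add' f g := by simp only [mvHasseDeriv, eval₂_add, coeff_add]
  map_smul' c f := by
    simp only [mvHasseDeriv, smul_eq_C_mul, eval₂_mul, eval₂_C, RingHom.comp_apply, coeff_C_mul,
      RingHom.id_apply]

variable (F : Type*) [Field F] (r k : ℕ)

def badLocus (d n : ℕ) : Set (Fin k × Fin r → F) :=
  {x | ∃ f : MvPolynomial (Fin r) F, f ≠ 0 ∧ f.totalDegree ≤ d ∧
    ∀ i, MultGE f (fun l => x (i, l)) n}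

/-- Row `(i, α)` is the condition `H^α f (x_i) = 0` on the coefficients of `f` in the monomials
of degree `≤ d`. -/
noncomputable def hasseMatrix (d n : ℕ) :
    Matrix (Fin k × exponentsBelow (Fin r) n) (exponentsBelow (Fin r) (d + 1))
      (MvPolynomial (Fin k × Fin r) F) :=
  fun iα β => rename (Prod.mk iα.1) (mvHasseDeriv (iα.2 : Fin r →₀ ℕ) (monomial β.1 1))

variable {F r k}

theorem hasseMatrix_map_eval_mulVec {d n : ℕ} (x : Fin k × Fin r → F)
    (c : exponentsBelow (Fin r) (d + 1) → F) (i : Fin k) (α : exponentsBelow (Fin r) n) :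
    ((hasseMatrix F r k d n).map (eval x)).mulVec c (i, α) =
      eval (fun l => x (i, l)) (mvHasseDeriv α.1 (sumMonomials _ c)) := by
  change _ = eval _ (lmvHasseDeriv α.1 _)
  simp only [Matrix.mulVec, dotProduct, Matrix.map_apply, hasseMatrix, eval_rename_prod_mk,
    sumMonomials, Fintype.linearCombination_apply, map_sum, map_smul, smul_eval]
  exact Finset.sum_congr rfl fun β _ => mul_comm _ _

theorem badLocus_eq (d n : ℕ) :
    badLocus F r k d n =
      {x | ∃ c, c ≠ 0 ∧ ((hasseMatrix F r k d n).map (eval x)).mulVec c = 0} := by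
  ext x
  constructor
  · rintro ⟨f, hf, hfd, hmult⟩
    have hsum := sumMonomials_coeff (support_subset_exponentsBelow_iff.mpr hfd)
    refine ⟨fun β => coeff β f, fun hc => hf ?_, funext fun ⟨i, α⟩ => ?_⟩
    · rw [← hsum, hc, map_zero]
    · rw [hasseMatrix_map_eval_mulVec, hsum]
      exact hmult i α (mem_exponentsBelow.mp α.2)
  · rintro ⟨c, hc, hMc⟩
    refine ⟨sumMonomials _ c, fun h => hc (funext fun β => ?_),
      support_subset_exponentsBelow_iff.mp (support_sumMonomials_subset _ c),
      fun i α hα => ?_⟩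
    · simpa [coeff_sumMonomials] using congrArg (coeff β.1) h
    · simpa [hasseMatrix_map_eval_mulVec] using
        congrFun hMc (i, ⟨α, mem_exponentsBelow.mpr hα⟩)

theorem zarClosed_badLocus (d n : ℕ) : ZarClosed (badLocus F r k d n) := by
  rw [badLocus_eq]
  exact zarClosed_setOf_exists_mulVec_eq_zero _

end HasseConditions

theorem AlgebraicallySpread.of_forall_notMem_badLocus {F : Type*} [Field F] {r k : ℕ}
    {p q : Fin k → Fin r → F} (hq : AlgebraicallySpread F r (Set.range q))
    (hcard : (Set.range p).ncard = (Set.range q).ncard)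
    (hbad : ∀ d n, Function.uncurry q ∉ badLocus F r k d n →
      Function.uncurry p ∉ badLocus F r k d n) :
    AlgebraicallySpread F r (Set.range p) := by
  refine ⟨Set.finite_range p, fun ε hε => ?_⟩
  obtain ⟨n₀, hn₀⟩ := hq.2 ε hε
  refine ⟨n₀, fun n hn f hf hmult => ?_⟩
  by_contra hf0
  refine hbad f.totalDegree n ?_ ⟨f, hf0, le_rfl, fun i => hmult _ ⟨i, rfl⟩⟩
  rintro ⟨g, hg0, hgf, hgmult⟩
  refine hg0 (hn₀ n hn g ?_ ?_)
  · rw [← hcard]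
    exact (Nat.cast_le.mpr hgf).trans_lt hf
  · rintro _ ⟨i, rfl⟩
    exact hgmult i

theorem veryGeneric_points_algebraicallySpread_general
    (F : Type) [Field F] (r k : ℕ)
    (hex : ∃ P : Set (Fin r → F), P.Finite ∧ P.ncard = k ∧ AlgebraicallySpread F r P) :
    ∃ Z : ℕ → Set (Fin k × Fin r → F),
      (∀ i, ZarClosed (Z i) ∧ Z i ≠ Set.univ) ∧
      ∀ p : Fin k → Fin r → F,
        (∀ i, (fun x : Fin k × Fin r => p x.1 x.2) ∉ Z i) →
        Function.Injective p ∧ AlgebraicallySpread F r (Set.range p) := by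
  obtain ⟨P, hPfin, hPk, hP⟩ := hex
  have : Finite P := hPfin
  obtain ⟨e⟩ : Nonempty (Fin k ≃ P) :=
    Finite.card_eq.mp (by rw [Nat.card_coe_set_eq, hPk, Nat.card_fin])
  set q : Fin k → Fin r → F := Subtype.val ∘ e
  have hq : Function.Injective q := Subtype.val_injective.comp e.injective
  have hqP : Set.range q = P := by
    rw [Set.range_comp, e.range_eq_univ, Set.image_univ, Subtype.range_coe]
  let diagonal (ij : Fin k × Fin k) : Set (Fin k × Fin r → F) :=
    {x | ∀ l, x (ij.1, l) = x (ij.2, l)}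
  obtain ⟨Z, hZ, havoid⟩ := exists_seq_zarClosed_ne_univ
    (Set.range (fun dn : ℕ × ℕ => badLocus F r k dn.1 dn.2) ∪ Set.range diagonal)
    ((Set.countable_range _).union (Set.countable_range _))
    (by
      rintro _ (⟨_, rfl⟩ | ⟨_, rfl⟩)
      exacts [zarClosed_badLocus _ _, zarClosed_setOf_forall_eq _ _])
    (Function.uncurry q)
  refine ⟨Z, hZ, fun p hp => ?_⟩
  have hp_inj : Function.Injective p := fun i j hij => by
    by_contra hne
    exact havoid _ hp (diagonal (i, j)) (Or.inr ⟨_, rfl⟩)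
      (fun h => hne (hq (funext h))) (fun l => congrFun hij l)
  refine ⟨hp_inj, (hqP ▸ hP).of_forall_notMem_badLocus ?_ fun d n =>
    havoid _ hp _ (Or.inl ⟨(d, n), rfl⟩)⟩
  rw [Set.ncard_range_of_injective hp_inj, Set.ncard_range_of_injective hq]

/-- If `F` is uncountable and some algebraically spread set of `k` points exists in `F^r`, then
a very generic `k`-tuple of points of `F^r` — i.e. one avoiding a suitable countable family of
proper Zariski-closed subsets of `(F^r)^k` — consists of `k` distinct points forming an
algebraically spread set. -/
theorem veryGeneric_points_algebraicallySpread
    (F : Type) [Field F] [Uncountable F] (r k : ℕ) (hr : 1 ≤ r) (hk : 1 ≤ k)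
    (hex : ∃ P : Set (Fin r → F), P.Finite ∧ P.ncard = k ∧ AlgebraicallySpread F r P) :
    ∃ Z : ℕ → Set (Fin k × Fin r → F),
      (∀ i, ZarClosed (Z i) ∧ Z i ≠ Set.univ) ∧
      ∀ p : Fin k → Fin r → F,
        (∀ i, (fun x : Fin k × Fin r => p x.1 x.2) ∉ Z i) →
        Function.Injective p ∧ AlgebraicallySpread F r (Set.range p) :=
  veryGeneric_points_algebraicallySpread_general F r k hex
end

section
/- Let F be a field, d ≥ 2 an integer, and let L be a set of lines in F^d that is algebraically spread. Then for every field extension F' of F, the set of lines L, viewed inside (F')^d, is algebraically spread. -/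
/-- A point set `P` on an `r`-dimensional affine flat `H ⊆ F^d` is algebraically spread on `H`,
via an affine parameterization of `H`. -/
def SpreadOnFlat (F : Type*) [Field F] (d r : ℕ) (H P : Set (Fin d → F)) : Prop :=
  ∃ φ : (Fin r → F) →ᵃ[F] (Fin d → F),
    Function.Injective φ ∧ Set.range φ = H ∧ P ⊆ H ∧
    AlgebraicallySpread F r (φ ⁻¹' P)

/-- `ℓ ⊆ F^d` is a line. -/
def IsLine {F : Type*} [Field F] {d : ℕ} (ℓ : Set (Fin d → F)) : Prop :=
  ∃ x₀ b : Fin d → F, b ≠ 0 ∧ ℓ = {y | ∃ t : F, y = x₀ + t • b}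

/-- A set of lines `L` in `F^d` is algebraically spread: some hyperplane `H` meets the lines
of `L` in pairwise distinct single points forming an algebraically spread point set on `H`. -/
def SpreadLines (F : Type*) [Field F] (d : ℕ) (L : Set (Set (Fin d → F))) : Prop :=
  ∃ (H : Set (Fin d → F)) (pt : Set (Fin d → F) → (Fin d → F)),
    (∀ ℓ ∈ L, ℓ ∩ H = {pt ℓ}) ∧ Set.InjOn pt L ∧
    SpreadOnFlat F d (d - 1) H (pt '' L)

/-- Restriction of `f` to the line `t ↦ x₀ + t • b`, as a univariate polynomial. -/
noncomputable def restrictLine {F : Type*} [CommSemiring F] {d : ℕ}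
    (f : MvPolynomial (Fin d) F) (x₀ b : Fin d → F) : Polynomial F :=
  MvPolynomial.eval₂ Polynomial.C
    (fun i => Polynomial.C (x₀ i) + Polynomial.C (b i) * Polynomial.X) f

/-- `f` vanishes to order `(u,v;γ)` at `p` along the line `t ↦ x₀ + t • b`. -/
def VanishesToOrderAlong {F : Type*} [Field F] {d : ℕ}
    (f : MvPolynomial (Fin d) F) (u v γ : ℝ)
    (x₀ b : Fin d → F) (p : Fin d → F) : Prop :=
  ∀ t₀ : F, x₀ + t₀ • b = p →
    ∀ α : Fin d →₀ ℕ, (∀ i : Fin d, (i : ℕ) = d - 1 → α i = 0) →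
      ((∑ i, α i : ℕ) : ℝ) < u →
      (Polynomial.X - Polynomial.C t₀) ^ ⌈v - ((∑ i, α i : ℕ) : ℝ) / γ⌉₊ ∣
        restrictLine (mvHasseDeriv α f) x₀ b

/-- Membership in `V(r,s)`, the span of monomials `x^α` with `α_1 + ⋯ + α_{d-1} < r`
and `|α| < s`. -/
def MemV {F : Type*} [Field F] {d : ℕ} (r s : ℝ) (f : MvPolynomial (Fin d) F) : Prop :=
  ∀ α : Fin d →₀ ℕ, MvPolynomial.coeff α f ≠ 0 →
    ((∑ i ∈ Finset.univ.filter fun i : Fin d => (i : ℕ) < d - 1, α i : ℕ) : ℝ) < r ∧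
    ((∑ i, α i : ℕ) : ℝ) < s

/-!
Over `F` the data are a parameterization `φ x = M x + c` of the hyperplane and the points where
the lines `x₀ + t b` cross it. Over `F'` we use the same matrix `M`. A line still meets the
extended hyperplane in a single point: that `b` is not in the column space of the injective
matrix `M` makes `[M | b]` injective, and a matrix with a left inverse stays injective after
extension of scalars. The crossing points are then the images of the old ones, and a polynomial
over `F'` vanishing on them is zero coordinate by coordinate in an `F`-basis of `F'`: each
coordinate polynomial is defined over `F`, has no larger degree, and vanishes to the same order
at the old points, because Hasse derivatives and evaluation at `F`-points commute with
`F`-linear maps applied to coefficients.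
-/

open MvPolynomial Matrix

section HasseDeriv

variable {R : Type*} [CommSemiring R] {d : ℕ} (α : Fin d →₀ ℕ)

theorem mvHasseDeriv_add (f g : MvPolynomial (Fin d) R) :
    mvHasseDeriv α (f + g) = mvHasseDeriv α f + mvHasseDeriv α g := by
  simp only [mvHasseDeriv, eval₂_add, coeff_add]

theorem mvHasseDeriv_C_mul_s8 (c : R) (f : MvPolynomial (Fin d) R) :
    mvHasseDeriv α (C c * f) = C c * mvHasseDeriv α f := by
  simp [mvHasseDeriv, coeff_C_mul]

theorem mvHasseDeriv_map_s8 {S : Type*} [CommSemiring S] (ρ : R →+* S) (f : MvPolynomial (Fin d) R) :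
    mvHasseDeriv α (map ρ f) = map ρ (mvHasseDeriv α f) := by
  unfold mvHasseDeriv
  rw [eval₂_map, ← coeff_map, eval₂_comp_left (map (map ρ))]
  congr 2
  · ext : 2
    simp
  · ext : 1
    simp

end HasseDeriv

theorem totalDegree_addMonoidAlgebraMap_le {R S σ : Type*} [CommSemiring R] [CommSemiring S]
    (g : S →+ R) (f : MvPolynomial σ S) :
    totalDegree (AddMonoidAlgebra.map g f : MvPolynomial σ R) ≤ f.totalDegree := by
  refine Finset.sup_mono fun γ hγ => ?_
  rw [mem_support_iff] at hγ ⊢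
  exact fun h => hγ (by rw [coeff_addMonoidAlgebraMap, h, map_zero])

theorem eval_mvHasseDeriv_addMonoidAlgebraMap {K L : Type*} [CommSemiring K] [CommSemiring L]
    [Algebra K L] {d : ℕ} (χ : L →ₗ[K] K) (α : Fin d →₀ ℕ)
    (f : MvPolynomial (Fin d) L) (q : Fin d → K) :
    eval q (mvHasseDeriv α (AddMonoidAlgebra.map χ.toAddMonoidHom f)) =
      χ (eval (algebraMap K L ∘ q) (mvHasseDeriv α f)) := by
  induction f using MvPolynomial.induction_on' with
  | monomial β c =>
    -- both sides become `χ c * eval q (mvHasseDeriv α (monomial β 1))`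
    have hK : AddMonoidAlgebra.map χ.toAddMonoidHom (monomial β c) = C (χ c) * monomial β 1 := by
      rw [C_mul_monomial, mul_one]
      exact AddMonoidAlgebra.map_single _ _ _
    have hL : monomial β c = C c * map (algebraMap K L) (monomial β 1) := by
      rw [map_monomial, map_one, C_mul_monomial, mul_one]
    rw [hK, hL, mvHasseDeriv_C_mul_s8, mvHasseDeriv_C_mul_s8, mvHasseDeriv_map_s8, eval_mul, eval_mul,
      eval_C, eval_C, ← map_eval, mul_comm c, ← Algebra.smul_def, map_smul, smul_eq_mul, mul_comm]
  | add f g hf hg =>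
    simp only [AddMonoidAlgebra.map_add, mvHasseDeriv_add, map_add, hf, hg]

theorem AlgebraicallySpread.image_algebraMap {K L : Type*} [Field K] [Field L] [Algebra K L]
    {r : ℕ} {Q : Set (Fin r → K)} (h : AlgebraicallySpread K r Q) :
    AlgebraicallySpread L r ((algebraMap K L ∘ ·) '' Q) := by
  refine ⟨h.1.image _, fun ε hε => ?_⟩
  obtain ⟨n₀, hn₀⟩ := h.2 ε hε
  refine ⟨n₀, fun n hn f hdeg hmult => ?_⟩
  rw [Set.ncard_image_of_injective _ (algebraMap K L).injective.comp_left] at hdeg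
  let B := Module.Free.chooseBasis K L
  have hcoord : ∀ j, AddMonoidAlgebra.map (B.coord j).toAddMonoidHom f = 0 := fun j =>
    hn₀ n hn _ ((Nat.cast_le.2 (totalDegree_addMonoidAlgebraMap_le (R := K) _ f)).trans_lt hdeg)
      fun q hq α hα => by
        rw [eval_mvHasseDeriv_addMonoidAlgebraMap, hmult _ (Set.mem_image_of_mem _ hq) α hα,
          map_zero]
  ext γ
  rw [coeff_zero, ← B.forall_coord_eq_zero_iff]
  exact fun j => by simpa using congr(coeff γ $(hcoord j))

namespace Matrix

theorem replicateCol_unit_mulVec {R κ : Type*} [CommSemiring R] (b : κ → R) (c : R) :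
    replicateCol Unit b *ᵥ (fun _ => c) = c • b := by
  ext; simp [mulVec, dotProduct, mul_comm]

variable {K L ι κ : Type*} [Field K] [CommRing L] [Fintype ι]

theorem mulVec_injective_map [DecidableEq ι] [Fintype κ] [DecidableEq κ] (f : K →+* L)
    {M : Matrix κ ι K} (hM : Function.Injective M.mulVec) :
    Function.Injective (M.map f).mulVec := by
  obtain ⟨g, hg⟩ := M.mulVecLin.exists_leftInverse_of_injective (LinearMap.ker_eq_bot.2 hM)
  have hPM : LinearMap.toMatrix' g * M = 1 := by
    rw [← LinearMap.toMatrix'_toLin' M, ← LinearMap.toMatrix'_comp]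
    exact (congrArg LinearMap.toMatrix' hg).trans LinearMap.toMatrix'_id
  refine Function.LeftInverse.injective (g := ((LinearMap.toMatrix' g).map f).mulVec) fun w => ?_
  rw [mulVec_mulVec, ← Matrix.map_mul, hPM, Matrix.map_one f (map_zero f) (map_one f), one_mulVec]

theorem mulVec_fromCols_replicateCol_injective {M : Matrix κ ι K} {b : κ → K}
    (hM : Function.Injective M.mulVec) (hb : b ∉ Set.range M.mulVec) :
    Function.Injective (fromCols M (replicateCol Unit b)).mulVec := by
  rw [← coe_mulVecLin, injective_iff_map_eq_zero]
  intro v hv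
  obtain ⟨w, c, rfl⟩ : ∃ w c, v = Sum.elim w fun _ : Unit => c :=
    ⟨v ∘ Sum.inl, v (Sum.inr ()), by ext (_ | _) <;> rfl⟩
  rw [mulVecLin_apply, fromCols_mulVec_sumElim, replicateCol_unit_mulVec] at hv
  obtain rfl : c = 0 := by
    by_contra hc
    refine hb ⟨-c⁻¹ • w, ?_⟩
    rw [mulVec_smul, eq_neg_of_add_eq_zero_left hv, neg_smul, smul_neg, neg_neg, smul_smul,
      inv_mul_cancel₀ hc, one_smul]
  rw [zero_smul, add_zero, ← mulVec_zero (A := M)] at hv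
  rw [hM hv]
  ext (_ | _) <;> rfl

theorem comp_notMem_range_mulVec_map [DecidableEq ι] [Fintype κ] [DecidableEq κ] [Nontrivial L]
    (f : K →+* L) {M : Matrix κ ι K} {b : κ → K}
    (hM : Function.Injective M.mulVec) (hb : b ∉ Set.range M.mulVec) :
    f ∘ b ∉ Set.range (M.map f).mulVec := by
  rintro ⟨u, hu⟩
  have key := mulVec_injective_map f (mulVec_fromCols_replicateCol_injective hM hb)
    (a₁ := Sum.elim u fun _ => -1) (a₂ := 0) (by
      rw [fromCols_map, fromCols_mulVec_sumElim, mulVec_zero, hu,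
        show (replicateCol Unit b).map f = replicateCol Unit (f ∘ b) from rfl,
        replicateCol_unit_mulVec, neg_one_smul, add_neg_cancel])
  exact one_ne_zero (neg_eq_zero.1 (congrFun key (Sum.inr ())))

end Matrix

theorem AffineMap.notMem_range_linear_of_line_inter_range_eq_singleton {k V W : Type*} [Ring k]
    [AddCommGroup V] [Module k V] [AddCommGroup W] [Module k W] (φ : V →ᵃ[k] W)
    {x₀ b p : W} (hb : b ≠ 0) (h : {y | ∃ t : k, y = x₀ + t • b} ∩ Set.range φ = {p}) :
    b ∉ Set.range φ.linear := by
  rintro ⟨w, hw⟩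
  obtain ⟨⟨t, hpt⟩, q, hq⟩ : p ∈ {y | ∃ t : k, y = x₀ + t • b} ∩ Set.range φ := h ▸ rfl
  have hbp : b + p ∈ {y | ∃ t : k, y = x₀ + t • b} ∩ Set.range φ :=
    ⟨⟨t + 1, by rw [hpt, add_smul, one_smul, add_comm b, add_assoc]⟩,
      w + q, by rw [← vadd_eq_add, φ.map_vadd, hw, hq, vadd_eq_add]⟩
  rw [h, Set.mem_singleton_iff, add_eq_right] at hbp
  exact hb hbp

namespace AffineMap

variable {K : Type*} (L : Type*) [Field K] [CommRing L] [Algebra K L] {ι κ : Type*}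
  [Fintype ι] [DecidableEq ι] (φ : (ι → K) →ᵃ[K] (κ → K))

noncomputable def baseChange : (ι → L) →ᵃ[L] (κ → L) :=
  ((LinearMap.toMatrix' φ.linear).map (algebraMap K L)).mulVecLin.toAffineMap +
    AffineMap.const L (ι → L) (algebraMap K L ∘ φ 0)

theorem baseChange_apply (x : ι → L) :
    φ.baseChange L x =
      (LinearMap.toMatrix' φ.linear).map (algebraMap K L) *ᵥ x + algebraMap K L ∘ φ 0 :=
  rfl

theorem baseChange_linear :
    (φ.baseChange L).linear = ((LinearMap.toMatrix' φ.linear).map (algebraMap K L)).mulVecLin := by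
  simp [baseChange]

theorem baseChange_comp (x : ι → K) :
    φ.baseChange L (algebraMap K L ∘ x) = algebraMap K L ∘ φ x := by
  ext i
  rw [baseChange_apply, Pi.add_apply, ← RingHom.map_mulVec, LinearMap.toMatrix'_mulVec, φ.decomp]
  simp

variable {L φ}

theorem baseChange_injective [Fintype κ] [DecidableEq κ] (hφ : Function.Injective φ) :
    Function.Injective (φ.baseChange L) := by
  rw [← linear_injective_iff, baseChange_linear, Matrix.coe_mulVecLin]
  refine Matrix.mulVec_injective_map _ ?_
  rw [← Matrix.coe_mulVecLin, ← Matrix.toLin'_apply', Matrix.toLin'_toMatrix']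
  exact φ.linear_injective_iff.2 hφ

end AffineMap

theorem affineSpan_image_line_subset {K L κ : Type*} [CommRing K] [CommRing L] [Algebra K L]
    {x₀ b : κ → K} {y : κ → L}
    (hy : y ∈ affineSpan L ((algebraMap K L ∘ ·) '' {z | ∃ t : K, z = x₀ + t • b})) :
    ∃ s : L, y = algebraMap K L ∘ x₀ + s • (algebraMap K L ∘ b) := by
  have hle : affineSpan L ((algebraMap K L ∘ ·) '' {z | ∃ t : K, z = x₀ + t • b}) ≤
      AffineSubspace.mk' (algebraMap K L ∘ x₀) (Submodule.span L {algebraMap K L ∘ b}) := by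
    rw [affineSpan_le]
    rintro _ ⟨_, ⟨t, rfl⟩, rfl⟩
    refine AffineSubspace.mem_mk'.2 (Submodule.mem_span_singleton.2 ⟨algebraMap K L t, ?_⟩)
    ext i
    simp
  obtain ⟨s, hs⟩ := Submodule.mem_span_singleton.1 (AffineSubspace.mem_mk'.1 (hle hy))
  exact ⟨s, by rw [hs, vsub_eq_sub, add_sub_cancel]⟩

theorem affineSpan_image_line_inter_range_baseChange {K L ι κ : Type*} [Field K] [Field L]
    [Algebra K L] [Fintype ι] [DecidableEq ι] [Fintype κ] [DecidableEq κ]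
    {φ : (ι → K) →ᵃ[K] (κ → K)} (hφ : Function.Injective φ) {x₀ b p : κ → K} (hb : b ≠ 0)
    (h : {y | ∃ t : K, y = x₀ + t • b} ∩ Set.range φ = {p}) :
    (affineSpan L ((algebraMap K L ∘ ·) '' {y | ∃ t : K, y = x₀ + t • b}) : Set (κ → L)) ∩
      Set.range (φ.baseChange L) = {algebraMap K L ∘ p} := by
  obtain ⟨⟨t, hpt⟩, q, rfl⟩ : p ∈ {y | ∃ t : K, y = x₀ + t • b} ∩ Set.range φ := h ▸ rfl
  refine Set.eq_singleton_iff_unique_mem.2 ⟨⟨subset_affineSpan _ _ ⟨_, ⟨t, hpt⟩, rfl⟩,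
    _, φ.baseChange_comp L q⟩, ?_⟩
  rintro _ ⟨hy, w, rfl⟩
  obtain ⟨s, hs⟩ := affineSpan_image_line_subset hy
  have hM : (LinearMap.toMatrix' φ.linear).mulVec = φ.linear :=
    funext (LinearMap.toMatrix'_mulVec _)
  have hb' := Matrix.comp_notMem_range_mulVec_map (algebraMap K L)
    (M := LinearMap.toMatrix' φ.linear) (hM ▸ φ.linear_injective_iff.2 hφ)
    (hM ▸ φ.notMem_range_linear_of_line_inter_range_eq_singleton hb h)
  have key : (φ.baseChange L).linear (w - algebraMap K L ∘ q) =
      (s - algebraMap K L t) • (algebraMap K L ∘ b) := by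
    rw [← vsub_eq_sub, AffineMap.linearMap_vsub, φ.baseChange_comp L, hs, hpt, vsub_eq_sub]
    ext i
    simp only [Pi.sub_apply, Pi.add_apply, Pi.smul_apply, Function.comp_apply, map_add, smul_eq_mul,
      map_mul]
    ring
  obtain rfl : s = algebraMap K L t := by
    by_contra hst
    refine hb' ⟨(s - algebraMap K L t)⁻¹ • (w - algebraMap K L ∘ q), ?_⟩
    rw [Matrix.mulVec_smul, ← Matrix.mulVecLin_apply, ← φ.baseChange_linear L, key, smul_smul,
      inv_mul_cancel₀ (sub_ne_zero.2 hst), one_smul]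
  rw [hs, hpt]
  ext i
  simp [Algebra.smul_def]

theorem spreadOnFlat_range_baseChange {K L : Type*} [Field K] [Field L] [Algebra K L] {d r : ℕ}
    {φ : (Fin r → K) →ᵃ[K] (Fin d → K)} (hφ : Function.Injective φ) {P : Set (Fin d → K)}
    (hP : P ⊆ Set.range φ) (hspread : AlgebraicallySpread K r (φ ⁻¹' P)) :
    SpreadOnFlat L d r (Set.range (φ.baseChange L)) ((algebraMap K L ∘ ·) '' P) := by
  have hpre : φ.baseChange L ⁻¹' ((algebraMap K L ∘ ·) '' P) =
      (algebraMap K L ∘ ·) '' (φ ⁻¹' P) := by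
    ext w
    constructor
    · rintro ⟨_, hp, hw⟩
      obtain ⟨q, rfl⟩ := hP hp
      exact ⟨q, hp, AffineMap.baseChange_injective hφ ((φ.baseChange_comp L q).trans hw)⟩
    · rintro ⟨q, hq, rfl⟩
      exact ⟨φ q, hq, (φ.baseChange_comp L q).symm⟩
  refine ⟨φ.baseChange L, AffineMap.baseChange_injective hφ, rfl, ?_, ?_⟩
  · rintro _ ⟨p, hp, rfl⟩
    obtain ⟨q, rfl⟩ := hP hp
    exact ⟨_, φ.baseChange_comp L q⟩
  · rw [hpre]
    exact hspread.image_algebraMap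

theorem spreadLines_image_of_inter_eq_singleton {F α : Type*} [Field F] {d : ℕ} {L : Set α}
    (E : α → Set (Fin d → F)) (H : Set (Fin d → F)) (pt : α → Fin d → F)
    (hmeet : ∀ ℓ ∈ L, E ℓ ∩ H = {pt ℓ}) (hinj : Set.InjOn pt L)
    (hspread : SpreadOnFlat F d (d - 1) H (pt '' L)) :
    SpreadLines F d (E '' L) := by
  classical
  let pt' : Set (Fin d → F) → Fin d → F := fun S => if h : ∃ p, S ∩ H = {p} then h.choose else 0
  have hpt' : ∀ ℓ ∈ L, pt' (E ℓ) = pt ℓ := fun ℓ hℓ => by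
    have h : ∃ p, E ℓ ∩ H = {p} := ⟨_, hmeet ℓ hℓ⟩
    simp only [pt', dif_pos h]
    exact Set.singleton_injective (h.choose_spec.symm.trans (hmeet ℓ hℓ))
  refine ⟨H, pt', ?_, ?_, ?_⟩
  · rintro _ ⟨ℓ, hℓ, rfl⟩
    rw [hpt' ℓ hℓ]
    exact hmeet ℓ hℓ
  · rintro _ ⟨ℓ₁, h₁, rfl⟩ _ ⟨ℓ₂, h₂, rfl⟩ h
    rw [hpt' _ h₁, hpt' _ h₂] at h
    rw [hinj h₁ h₂ h]
  · rwa [Set.image_image, Set.image_congr hpt']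

theorem spreadLines_of_fieldExtension_general
    (F : Type) [Field F] (F' : Type) [Field F'] [Algebra F F']
    (d : ℕ)
    (L : Set (Set (Fin d → F))) (hlines : ∀ ℓ ∈ L, IsLine ℓ)
    (hspread : SpreadLines F d L) :
    SpreadLines F' d
      ((fun ℓ => ((affineSpan F' ((fun x => fun i => algebraMap F F' (x i)) '' ℓ) :
          AffineSubspace F' (Fin d → F')) : Set (Fin d → F'))) '' L) := by
  obtain ⟨H, pt, hmeet, hinj, φ, hφ, rfl, hPH, hQ⟩ := hspread
  refine spreadLines_image_of_inter_eq_singleton _ (Set.range (φ.baseChange F'))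
    ((algebraMap F F' ∘ ·) ∘ pt) (fun ℓ hℓ => ?_)
    ((algebraMap F F').injective.comp_left.comp_injOn hinj) ?_
  · obtain ⟨x₀, b, hb, rfl⟩ := hlines ℓ hℓ
    exact affineSpan_image_line_inter_range_baseChange hφ hb (hmeet _ hℓ)
  · rw [Set.image_comp]
    exact spreadOnFlat_range_baseChange hφ hPH hQ

/-- An algebraically spread set of lines in `F^d` remains algebraically spread when viewed
inside `(F')^d`, for any field extension `F'` of `F`; here the line `ℓ` viewed inside `(F')^d`
is the affine span over `F'` of the image of `ℓ` under the coordinatewise embedding. -/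
theorem spreadLines_of_fieldExtension
    (F : Type) [Field F] (F' : Type) [Field F'] [Algebra F F']
    (d : ℕ) (hd : 2 ≤ d)
    (L : Set (Set (Fin d → F))) (hLfin : L.Finite) (hlines : ∀ ℓ ∈ L, IsLine ℓ)
    (hspread : SpreadLines F d L) :
    SpreadLines F' d
      ((fun ℓ => ((affineSpan F' ((fun x => fun i => algebraMap F F' (x i)) '' ℓ) :
          AffineSubspace F' (Fin d → F')) : Set (Fin d → F'))) '' L) :=
  spreadLines_of_fieldExtension_general F F' d L hlines hspread
end

section
/- Let F be a field, r ≥ 1 and a ≥ 1 integers, and let A_1,…,A_r ⊆ F each have size a. Then the grid A_1 × ⋯ × A_r ⊆ F^r, a set of k = a^r points, is algebraically spread; in fact the following stronger property holds: for every positive integer n, every polynomial f ∈ F[x_1,…,x_r] of degree less than a·n with mult(f,p) ≥ n for all p ∈ A_1 × ⋯ × A_r is the zero polynomial. -/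
/-!
The multiplicity of `f` at `p` is the order of the power series `f(x + p)`, so it is additive
under products. Induct on the dimension `r` and then on `n`. Restricting `f` to a slice
`x₀ = t` with `t ∈ A₀` lowers neither the degree bound nor the multiplicities at the points of
the smaller grid, so by induction on `r` every such restriction vanishes and
`∏_{t ∈ A₀} (x₀ - t)` divides `f`. Each grid point lies on exactly one of these hyperplanes, so
the quotient has multiplicity `≥ n - 1` at every grid point and degree `< a (n - 1)`, and it
vanishes by induction on `n`.
-/

namespace MvPolynomial

section Shift

variable {σ R : Type*} [CommSemiring R]

noncomputable def shift (p : σ → R) : MvPolynomial σ R →ₐ[R] MvPolynomial σ R :=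
  aeval fun i => X i + C (p i)

noncomputable def orderAt (p : σ → R) (f : MvPolynomial σ R) : ℕ∞ :=
  (shift p f : MvPowerSeries σ R).order

theorem le_orderAt_iff {p : σ → R} {f : MvPolynomial σ R} {n : ℕ} :
    (n : ℕ∞) ≤ orderAt p f ↔ ∀ α : σ →₀ ℕ, α.degree < n → coeff α (shift p f) = 0 := by
  refine ⟨fun h α hα => ?_, fun h => MvPowerSeries.nat_le_order fun α hα => ?_⟩
  · rw [← coeff_coe]
    exact MvPowerSeries.coeff_of_lt_order (lt_of_lt_of_le (by exact_mod_cast hα) h)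
  · rw [coeff_coe]
    exact h α hα

theorem orderAt_C (p : σ → R) {c : R} (hc : c ≠ 0) : orderAt p (C c) = 0 := by
  rw [orderAt, shift, aeval_C, algebraMap_eq, coe_C, ← MvPowerSeries.monomial_zero_eq_C_apply,
    MvPowerSeries.order_monomial_of_ne_zero hc, map_zero, Nat.cast_zero]

theorem orderAt_mul [NoZeroDivisors R] (p : σ → R) (f g : MvPolynomial σ R) :
    orderAt p (f * g) = orderAt p f + orderAt p g := by
  rw [orderAt, map_mul, coe_mul, MvPowerSeries.order_mul]
  rfl

theorem orderAt_prod [NoZeroDivisors R] [Nontrivial R] {ι : Type*} (p : σ → R) (s : Finset ι)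
    (f : ι → MvPolynomial σ R) : orderAt p (∏ j ∈ s, f j) = ∑ j ∈ s, orderAt p (f j) := by
  rw [orderAt, map_prod, ← coeToMvPowerSeries.ringHom_apply, map_prod,
    MvPowerSeries.order_prod]
  rfl

end Shift

section ShiftLinear

variable {σ R : Type*} [CommRing R]

theorem shift_X_sub_C (p : σ → R) (i : σ) (t : R) :
    shift p (X i - C t) = X i + C (p i - t) := by
  simp only [shift, map_sub, aeval_X, aeval_C, algebraMap_eq]
  ring

theorem orderAt_X_sub_C_self [Nontrivial R] (p : σ → R) (i : σ) :
    orderAt p (X i - C (p i)) = 1 := by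
  rw [orderAt, shift_X_sub_C, sub_self, map_zero, add_zero, coe_X, MvPowerSeries.X,
    MvPowerSeries.order_monomial_of_ne_zero one_ne_zero, Finsupp.degree_single, Nat.cast_one]

theorem orderAt_X_sub_C_of_ne (p : σ → R) (i : σ) {t : R} (ht : p i ≠ t) :
    orderAt p (X i - C t) = 0 := by
  by_contra h
  have h0 := MvPowerSeries.order_ne_zero_iff_constCoeff_eq_zero.mp h
  rw [← MvPowerSeries.coeff_zero_eq_constantCoeff_apply, coeff_coe, shift_X_sub_C] at h0
  simp [sub_eq_zero, ht] at h0

theorem orderAt_prod_X_sub_C [IsDomain R] {p : σ → R} {i : σ} {s : Finset R} (hp : p i ∈ s) :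
    orderAt p (∏ t ∈ s, (X i - C t)) = 1 := by
  rw [orderAt_prod, Finset.sum_eq_single_of_mem _ hp
    fun t _ ht => orderAt_X_sub_C_of_ne p i (Ne.symm ht), orderAt_X_sub_C_self]

end ShiftLinear

theorem eval_mvHasseDeriv {R : Type*} [CommSemiring R] {d : ℕ} (p : Fin d → R)
    (α : Fin d →₀ ℕ) (f : MvPolynomial (Fin d) R) :
    eval p (mvHasseDeriv α f) = coeff α (shift p f) := by
  rw [mvHasseDeriv, ← coeff_map, eval₂_comp_left, shift, aeval_def]
  congr 2
  · ext; simp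
  · ext i; simp

theorem multGE_iff_le_orderAt {R : Type*} [CommSemiring R] {d : ℕ} {f : MvPolynomial (Fin d) R}
    {p : Fin d → R} {n : ℕ} : MultGE f p n ↔ (n : ℕ∞) ≤ orderAt p f := by
  simp only [MultGE, le_orderAt_iff, eval_mvHasseDeriv, Finsupp.degree_eq_sum]

theorem totalDegree_aeval_le {σ τ R : Type*} [CommSemiring R] {g : σ → MvPolynomial τ R}
    (hg : ∀ i, (g i).totalDegree ≤ 1) (f : MvPolynomial σ R) :
    (aeval g f).totalDegree ≤ f.totalDegree := by
  conv_lhs => rw [f.as_sum, map_sum]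
  refine totalDegree_finsetSum_le fun α hα => ?_
  rw [aeval_monomial]
  calc _ ≤ (algebraMap R (MvPolynomial τ R) (coeff α f)).totalDegree +
          (α.prod fun i k => g i ^ k).totalDegree :=
        totalDegree_mul _ _
    _ ≤ 0 + ∑ i ∈ α.support, α i := by
        gcongr
        · exact (totalDegree_C _).le
        · refine (totalDegree_finsetProd _ _).trans (Finset.sum_le_sum fun i _ => ?_)
          exact (totalDegree_pow _ _).trans (by simpa using Nat.mul_le_mul_left (α i) (hg i))
    _ ≤ f.totalDegree := by rw [zero_add]; exact le_totalDegree hα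

section Restrict

variable {R : Type*} [CommSemiring R] {r : ℕ}

noncomputable def restrictX0 (t : R) :
    MvPolynomial (Fin (r + 1)) R →ₐ[R] MvPolynomial (Fin r) R :=
  aeval (Fin.cases (C t) X)

theorem restrictX0_eq_eval (t : R) (f : MvPolynomial (Fin (r + 1)) R) :
    restrictX0 t f = Polynomial.eval (C t) (finSuccEquiv R r f) := by
  induction f using MvPolynomial.induction_on with
  | C a => simp [restrictX0, finSuccEquiv_apply, algebraMap_eq]
  | add p q hp hq => simp [map_add, hp, hq]
  | mul_X p i hp =>
    rw [map_mul, map_mul, Polynomial.eval_mul, hp]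
    congr 1
    induction i using Fin.cases with
    | zero => simp [restrictX0, finSuccEquiv_X_zero]
    | succ j => simp [restrictX0, finSuccEquiv_X_succ]

theorem totalDegree_restrictX0_le (t : R) (f : MvPolynomial (Fin (r + 1)) R) :
    (restrictX0 t f).totalDegree ≤ f.totalDegree :=
  totalDegree_aeval_le (fun i => Fin.cases (by simp)
    (fun j => (totalDegree_monomial_le _ _).trans (by simp)) i) f

theorem shift_restrictX0 (p : Fin (r + 1) → R) (f : MvPolynomial (Fin (r + 1)) R) :
    shift (Fin.tail p) (restrictX0 (p 0) f) = restrictX0 0 (shift p f) := by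
  refine DFunLike.congr_fun (algHom_ext fun i => ?_ :
    (shift (Fin.tail p)).comp (restrictX0 (p 0)) = (restrictX0 0).comp (shift p)) f
  induction i using Fin.cases with
  | zero => simp [shift, restrictX0, algebraMap_eq]
  | succ j => simp [shift, restrictX0, algebraMap_eq, Fin.tail]

theorem coeff_restrictX0_zero (α : Fin r →₀ ℕ) (f : MvPolynomial (Fin (r + 1)) R) :
    coeff α (restrictX0 0 f) = coeff (α.cons 0) f := by
  rw [restrictX0_eq_eval, map_zero, ← Polynomial.coeff_zero_eq_eval_zero,
    finSuccEquiv_coeff_coeff]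

theorem orderAt_le_orderAt_restrictX0 (p : Fin (r + 1) → R)
    (f : MvPolynomial (Fin (r + 1)) R) :
    orderAt p f ≤ orderAt (Fin.tail p) (restrictX0 (p 0) f) := by
  rw [orderAt, orderAt, shift_restrictX0]
  refine MvPowerSeries.le_order fun α hα => ?_
  rw [coeff_coe, coeff_restrictX0_zero, ← coeff_coe]
  apply MvPowerSeries.coeff_of_lt_order
  simpa [Finsupp.degree_eq_sum, Fin.sum_univ_succ] using hα

end Restrict

theorem X_sub_C_dvd_of_restrictX0_eq_zero {R : Type*} [CommRing R] {r : ℕ} {t : R}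
    {f : MvPolynomial (Fin (r + 1)) R} (h : restrictX0 t f = 0) : X 0 - C t ∣ f := by
  obtain ⟨q, hq⟩ := Polynomial.dvd_iff_isRoot.mpr (by rwa [Polynomial.IsRoot.def,
    ← restrictX0_eq_eval] : (finSuccEquiv R r f).IsRoot (C t))
  refine ⟨(finSuccEquiv R r).symm q, (finSuccEquiv R r).injective ?_⟩
  rw [map_mul, AlgEquiv.apply_symm_apply, hq, map_sub, finSuccEquiv_X_zero]
  simp [finSuccEquiv_apply]

section Field

variable {σ F : Type*} [Field F]

theorem isCoprime_X_sub_C_X_sub_C (i : σ) {s t : F} (hst : s ≠ t) :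
    IsCoprime (X i - C s : MvPolynomial σ F) (X i - C t) := by
  refine ⟨C (t - s)⁻¹, -C (t - s)⁻¹, ?_⟩
  rw [neg_mul, ← sub_eq_add_neg, ← mul_sub, sub_sub_sub_cancel_left, ← map_sub, ← map_mul,
    inv_mul_cancel₀ (sub_ne_zero.mpr hst.symm), map_one]

theorem prod_X_sub_C_dvd_of_restrictX0_eq_zero {r : ℕ} {s : Finset F}
    {f : MvPolynomial (Fin (r + 1)) F} (h : ∀ t ∈ s, restrictX0 t f = 0) :
    ∏ t ∈ s, (X 0 - C t) ∣ f :=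
  Finset.prod_dvd_of_coprime (fun _ _ _ _ hst => isCoprime_X_sub_C_X_sub_C 0 hst)
    fun t ht => X_sub_C_dvd_of_restrictX0_eq_zero (h t ht)

theorem totalDegree_X_sub_C (i : σ) (t : F) :
    (X i - C t : MvPolynomial σ F).totalDegree = 1 := by
  rw [sub_eq_add_neg, ← map_neg, totalDegree_add_eq_left_of_totalDegree_lt] <;>
    simp [totalDegree_X]

theorem X_sub_C_ne_zero (i : σ) (t : F) : (X i - C t : MvPolynomial σ F) ≠ 0 := fun h => by
  simpa [h] using totalDegree_X_sub_C i t

theorem totalDegree_prod_X_sub_C (i : σ) (s : Finset F) :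
    (∏ t ∈ s, (X i - C t) : MvPolynomial σ F).totalDegree = s.card := by
  classical
  induction s using Finset.induction_on with
  | empty => simp
  | insert t s ht ih =>
    rw [Finset.prod_insert ht, totalDegree_mul_of_isDomain (X_sub_C_ne_zero i t)
      (Finset.prod_ne_zero_iff.mpr fun t' _ => X_sub_C_ne_zero i t'), totalDegree_X_sub_C, ih,
      Finset.card_insert_of_notMem ht, add_comm]

end Field

end MvPolynomial

open MvPolynomial in
theorem eq_zero_of_totalDegree_lt_of_forall_grid_le_orderAt {F : Type*} [Field F] {a : ℕ} :
    ∀ {r n : ℕ} (A : Fin r → Finset F), (∀ i, a ≤ (A i).card) → ∀ f : MvPolynomial (Fin r) F,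
      f.totalDegree < a * n → (∀ p : Fin r → F, (∀ i, p i ∈ A i) → (n : ℕ∞) ≤ orderAt p f) →
      f = 0
  | 0, n, A, _, f, hdeg, hord => by
    have hn : n ≠ 0 := by rintro rfl; simp at hdeg
    rw [eq_C_of_isEmpty f, C_eq_zero]
    by_contra hc
    have h := hord Fin.elim0 fun i => i.elim0
    rw [eq_C_of_isEmpty f, orderAt_C _ hc, nonpos_iff_eq_zero, Nat.cast_eq_zero] at h
    exact hn h
  | _ + 1, 0, _, _, _, hdeg, _ => by simp at hdeg
  | r + 1, n + 1, A, hA, f, hdeg, hord => by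
    have hslice : ∀ t ∈ A 0, restrictX0 t f = 0 := fun t ht =>
      eq_zero_of_totalDegree_lt_of_forall_grid_le_orderAt (Fin.tail A) (fun i => hA i.succ) _
        ((totalDegree_restrictX0_le t f).trans_lt hdeg) fun p hp =>
        (hord (Fin.cons t p) (Fin.cases ht hp)).trans (orderAt_le_orderAt_restrictX0 _ f)
    obtain ⟨g, rfl⟩ := prod_X_sub_C_dvd_of_restrictX0_eq_zero hslice
    suffices g = 0 by rw [this, mul_zero]
    by_contra hg
    have hdeg' : g.totalDegree < a * n := by
      rw [totalDegree_mul_of_isDomain (Finset.prod_ne_zero_iff.mpr fun t _ => X_sub_C_ne_zero 0 t)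
        hg, totalDegree_prod_X_sub_C, Nat.mul_succ] at hdeg
      have := hA 0
      omega
    have hord' : ∀ p : Fin (r + 1) → F, (∀ i, p i ∈ A i) → (n : ℕ∞) ≤ orderAt p g := by
      intro p hp
      have h := hord p hp
      rwa [orderAt_mul, orderAt_prod_X_sub_C (hp 0), Nat.cast_succ, add_comm,
        ENat.add_le_add_iff_left ENat.one_ne_top] at h
    exact hg (eq_zero_of_totalDegree_lt_of_forall_grid_le_orderAt A hA g hdeg' hord')

theorem grid_algebraicallySpread_general
    (F : Type) [Field F] (r a : ℕ) (hr : 1 ≤ r)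
    (A : Fin r → Finset F) (hA : ∀ i, (A i).card = a) :
    AlgebraicallySpread F r {p : Fin r → F | ∀ i, p i ∈ A i} ∧
    ∀ n : ℕ, 0 < n → ∀ f : MvPolynomial (Fin r) F,
      f.totalDegree < a * n →
      (∀ p : Fin r → F, (∀ i, p i ∈ A i) → MultGE f p n) → f = 0 := by
  have hgrid : {p : Fin r → F | ∀ i, p i ∈ A i} = ↑(Fintype.piFinset A) := by ext; simp
  have vanish : ∀ n : ℕ, ∀ f : MvPolynomial (Fin r) F, f.totalDegree < a * n →
      (∀ p : Fin r → F, (∀ i, p i ∈ A i) → MultGE f p n) → f = 0 := fun n f hdeg hmult =>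
    eq_zero_of_totalDegree_lt_of_forall_grid_le_orderAt A (fun i => (hA i).ge) f hdeg
      fun p hp => MvPolynomial.multGE_iff_le_orderAt.mp (hmult p hp)
  refine ⟨⟨hgrid ▸ Finset.finite_toSet _, fun ε hε => ⟨0, fun n _ f hdeg hmult => ?_⟩⟩,
    fun n _ => vanish n⟩
  have hroot : ((a : ℝ) ^ r) ^ ((1 : ℝ) / r) = a := by
    rw [one_div, Real.pow_rpow_inv_natCast (Nat.cast_nonneg a) (by omega)]
  rw [hgrid, Set.ncard_coe_finset, Fintype.card_piFinset, Finset.prod_congr rfl fun i _ => hA i,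
    Finset.prod_const, Finset.card_univ, Fintype.card_fin, Nat.cast_pow, hroot] at hdeg
  refine vanish n f ?_ hmult
  have : (1 - ε) * a * n ≤ (a * n : ℝ) := by nlinarith [(by positivity : (0 : ℝ) ≤ a * n)]
  exact_mod_cast hdeg.trans_le this

/-- A grid `A_1 × ⋯ × A_r ⊆ F^r` with `|A_i| = a` (so `k = a^r` points) is algebraically
spread; in fact, for every `n ≥ 1`, every polynomial of degree `< a n` vanishing to
multiplicity at least `n` at every grid point is the zero polynomial. -/
theorem grid_algebraicallySpread
    (F : Type) [Field F] (r a : ℕ) (hr : 1 ≤ r) (ha : 1 ≤ a)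
    (A : Fin r → Finset F) (hA : ∀ i, (A i).card = a) :
    AlgebraicallySpread F r {p : Fin r → F | ∀ i, p i ∈ A i} ∧
    ∀ n : ℕ, 0 < n → ∀ f : MvPolynomial (Fin r) F,
      f.totalDegree < a * n →
      (∀ p : Fin r → F, (∀ i, p i ∈ A i) → MultGE f p n) → f = 0 :=
  grid_algebraicallySpread_general F r a hr A hA
end

section
/- For every integer d ≥ 2 there exists a constant C_d > 0 such that the following holds for all real q ≥ 3. Let N be a finite set, let x > 0 be a real number with |N| ≤ q^d − x, and let (m_p)_{p∈N} be nonnegative real numbers with ∑_{p∈N} m_p = (q−1)·x. If ∑_{p∈N} m_p^{d/(d−1)} ≤ x^{d/(d−1)} + (q−2)·x, then x ≤ C_d·q^{d − 1/d}. -/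
/-!
Write `e = d / (d - 1)`. The power mean inequality gives
`((q - 1) x) ^ e ≤ |N| ^ (e - 1) ∑ m_p ^ e ≤ (q ^ d - x) ^ (e - 1) (x ^ e + (q - 2) x)`.
Since `d (e - 1) = e`, both `(q - 1) ^ e` and `(q ^ d - x) ^ (e - 1)` are `q ^ e` times a power of
`1 - 1 / q`, resp. `1 - x / q ^ d`, and Bernoulli's inequality for these two powers leaves
`x / q ^ d · x ^ e ≤ d / q · x ^ e + (d - 1) (q - 2) x`.
Either `x ≤ 2 d q ^ (d - 1)`, or the first term on the right is at most half the left-hand side,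
and then `x ^ e < 2 d q ^ (d + 1)`, that is `x < 2 d q ^ (d - 1 / d)`.
-/

open Real

namespace Real

lemma rpow_sub_le_mul_one_sub_mul {Q y a : ℝ} (hQ : 0 < Q) (hyQ : y ≤ Q) (ha₀ : 0 ≤ a)
    (ha₁ : a ≤ 1) : (Q - y) ^ a ≤ Q ^ a * (1 - a * (y / Q)) := by
  have hyQ' : y / Q ≤ 1 := (div_le_one hQ).mpr hyQ
  have hsplit : Q - y = Q * (1 + -(y / Q)) := by field_simp; ring
  rw [hsplit, mul_rpow hQ.le (by linarith), sub_eq_add_neg, ← mul_neg]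
  gcongr
  exact rpow_one_add_le_one_add_mul_self (by linarith) ha₀ ha₁

lemma mul_one_sub_mul_le_rpow_sub {Q y a : ℝ} (hQ : 0 < Q) (hyQ : y ≤ Q) (ha : 1 ≤ a) :
    Q ^ a * (1 - a * (y / Q)) ≤ (Q - y) ^ a := by
  have hyQ' : y / Q ≤ 1 := (div_le_one hQ).mpr hyQ
  have hsplit : Q - y = Q * (1 + -(y / Q)) := by field_simp; ring
  rw [hsplit, mul_rpow hQ.le (by linarith), sub_eq_add_neg, ← mul_neg]
  gcongr
  exact one_add_mul_self_le_rpow_one_add (by linarith) ha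

end Real

lemma div_mul_rpow_le_of_sum_rpow_le {N : Type*} [Fintype N] {d q x : ℝ} {m : N → ℝ}
    (hd : 2 ≤ d) (hq : 2 ≤ q) (hx : 0 ≤ x) (hcard : (Fintype.card N : ℝ) ≤ q ^ d - x)
    (hm : ∀ p, 0 ≤ m p) (hsum : ∑ p, m p = (q - 1) * x)
    (hpow : ∑ p, m p ^ (d / (d - 1)) ≤ x ^ (d / (d - 1)) + (q - 2) * x) :
    x / q ^ d * x ^ (d / (d - 1)) ≤ d / q * x ^ (d / (d - 1)) + (d - 1) * (q - 2) * x := by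
  have hd₁ : d - 1 ≠ 0 := by linarith
  have hq₀ : 0 < q := by linarith
  set e := d / (d - 1) with he
  have he₁ : 1 ≤ e := by rw [he, le_div_iff₀ (by linarith)]; linarith
  have he₂ : e - 1 ≤ 1 := by rw [he, div_sub_one hd₁, div_le_one (by linarith)]; linarith
  have hxQ : x ≤ q ^ d := by linarith [(Fintype.card N).cast_nonneg (α := ℝ)]
  have hQe : (q ^ d) ^ (e - 1) = q ^ e := by
    rw [← rpow_mul hq₀.le]; congr 1; rw [he]; field_simp; ring
  have hrhs : 0 ≤ x ^ e + (q - 2) * x := by have := rpow_nonneg hx e; nlinarith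
  have hbernoulli : q ^ e * ((1 - e * (1 / q)) * x ^ e) ≤
      q ^ e * ((1 - (e - 1) * (x / q ^ d)) * (x ^ e + (q - 2) * x)) :=
    calc q ^ e * ((1 - e * (1 / q)) * x ^ e) ≤ (q - 1) ^ e * x ^ e := by
          rw [← mul_assoc]; gcongr; exact mul_one_sub_mul_le_rpow_sub hq₀ (by linarith) he₁
      _ = (∑ p, m p) ^ e := by rw [hsum, mul_rpow (by linarith) hx]
      _ ≤ (Fintype.card N : ℝ) ^ (e - 1) * ∑ p, m p ^ e := by
          simpa using rpow_sum_le_const_mul_sum_rpow_of_nonneg (s := Finset.univ) he₁ fun p _ => hm p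
      _ ≤ (q ^ d - x) ^ (e - 1) * (x ^ e + (q - 2) * x) := by
          gcongr
          exact Finset.sum_nonneg fun p _ => rpow_nonneg (hm p) e
      _ ≤ (q ^ d) ^ (e - 1) * (1 - (e - 1) * (x / q ^ d)) * (x ^ e + (q - 2) * x) := by
          gcongr
          exact rpow_sub_le_mul_one_sub_mul (by positivity) hxQ (by linarith) he₂
      _ = _ := by rw [hQe, mul_assoc]
  have hkey := mul_le_mul_of_nonneg_left (le_of_mul_le_mul_left hbernoulli (by positivity))
    (by linarith : 0 ≤ d - 1)
  have hde : (d - 1) * e = d := by rw [he]; field_simp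
  have hdropped : 0 ≤ x / q ^ d * (q - 2) * x :=
    mul_nonneg (mul_nonneg (by positivity) (by linarith)) hx
  linear_combination hkey + hdropped - (x / q ^ d * (x ^ e + (q - 2) * x) - x ^ e / q) * hde

lemma le_two_mul_rpow_of_div_mul_rpow_le {d q x : ℝ} (hd : 1 < d) (hq : 1 ≤ q) (hx : 0 < x)
    (h : x / q ^ d * x ^ (d / (d - 1)) ≤ d / q * x ^ (d / (d - 1)) + (d - 1) * (q - 2) * x) :
    x ≤ 2 * d * q ^ (d - 1 / d) := by
  have hq₀ : 0 < q := by linarith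
  have hQ₀ : 0 < q ^ d := rpow_pos_of_pos hq₀ d
  by_cases hsmall : x ≤ 2 * d * (q ^ d / q)
  · calc x ≤ 2 * d * q ^ (d - 1) := by rwa [rpow_sub_one hq₀.ne']
      _ ≤ 2 * d * q ^ (d - 1 / d) := by
        gcongr
        exact (div_le_one (by linarith)).mpr hd.le
  set e := d / (d - 1) with he
  have hxe : x ^ e < 2 * d * q ^ (d + 1) := by
    have hdq : d / q ≤ x / q ^ d / 2 := by
      rw [not_le, mul_div_assoc', div_lt_iff₀ hq₀] at hsmall
      rw [div_le_iff₀ hq₀, div_div, div_mul_eq_mul_div, le_div_iff₀ (by positivity)]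
      linarith
    have hr : x / q ^ d * x ^ e ≤ x / q ^ d * (2 * (d - 1) * (q - 2) * q ^ d) := by
      have hx' : x / q ^ d * (2 * (d - 1) * (q - 2) * q ^ d) = 2 * (d - 1) * (q - 2) * x := by
        field_simp
      linarith [mul_le_mul_of_nonneg_right hdq (rpow_nonneg hx.le e)]
    calc x ^ e ≤ 2 * (d - 1) * (q - 2) * q ^ d := le_of_mul_le_mul_left hr (by positivity)
      _ < 2 * d * q * q ^ d := mul_lt_mul_of_pos_right (by nlinarith) hQ₀
      _ = 2 * d * q ^ (d + 1) := by rw [rpow_add_one hq₀.ne']; ring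
  have hexp : (d - 1 / d) * e = d + 1 := by
    have : d - 1 ≠ 0 := by linarith
    have : d ≠ 0 := by linarith
    rw [he]; field_simp; ring
  have he₁ : 1 ≤ e := by rw [he, le_div_iff₀ (by linarith)]; linarith
  have hbound : 2 * d * q ^ (d + 1) ≤ (2 * d * q ^ (d - 1 / d)) ^ e := by
    rw [mul_rpow (by positivity) (by positivity), ← rpow_mul hq₀.le, hexp]
    gcongr
    exact self_le_rpow_of_one_le (by linarith) he₁
  exact ((rpow_lt_rpow_iff hx.le (by positivity) (by linarith)).mp (hxe.trans_le hbound)).le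

/-- The concavity/power-mean deduction at the end of the main proof: for every `d ≥ 2` there
is `C_d > 0` such that for all real `q ≥ 3`, every finite index set `N`, every real `x > 0`
with `|N| ≤ q^d - x`, and all nonnegative reals `(m_p)_{p ∈ N}` with `∑ m_p = (q-1) x`: if
`∑_{p ∈ N} m_p^{d/(d-1)} ≤ x^{d/(d-1)} + (q-2) x`, then `x ≤ C_d q^{d - 1/d}`. -/
theorem final_inequality (d : ℕ) (hd : 2 ≤ d) :
    ∃ C : ℝ, 0 < C ∧
      ∀ (q : ℝ), 3 ≤ q →
        ∀ (N : Type) [Fintype N] (m : N → ℝ) (x : ℝ),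
          0 < x → (Fintype.card N : ℝ) ≤ q ^ d - x →
          (∀ p, 0 ≤ m p) → (∑ p, m p) = (q - 1) * x →
          (∑ p, m p ^ ((d : ℝ) / ((d : ℝ) - 1))) ≤
            x ^ ((d : ℝ) / ((d : ℝ) - 1)) + (q - 2) * x →
          x ≤ C * q ^ ((d : ℝ) - 1 / (d : ℝ)) := by
  refine ⟨2 * d, by positivity, fun q hq N _ m x hx hcard hm hsum hpow => ?_⟩
  have hd' : (2 : ℝ) ≤ d := by exact_mod_cast hd
  rw [← rpow_natCast] at hcard
  exact le_two_mul_rpow_of_div_mul_rpow_le (by linarith) (by linarith) hx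
    (div_mul_rpow_le_of_sum_rpow_le hd' (by linarith) hx.le hcard hm hsum hpow)
end

section
/- Let d ≥ 2 be an integer and let q ≥ 2, c, m be real numbers with c ≥ m ≥ 1. Define T = {(a,b) ∈ ℝ_{≥0}^{d−1} × ℝ_{≥0} : |a| + b ≥ m, |a| < 1, and b < c − |a|/(q−1)}, where |a| = a_1+⋯+a_{d−1}. Then the Lebesgue measure of T equals (c − m)/(d−1)! + (d−1)·(1 − 1/(q−1))/d!. -/
/-!
For `a` in the corner simplex `{a ≥ 0, |a| < 1}` the vertical section of `T` over `a` is the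
interval `[m - |a|, c - |a|/(q-1))`; the constraint `b ≥ 0` is automatic because `m ≥ 1 > |a|`.
Its length `(c - m) + (1 - 1/(q-1)) |a|` is affine in `|a|`, so the volume of `T` is the integral
of an affine function of `|a|` over the simplex. Slicing off the first coordinate gives, by
induction on the dimension, `∫_{a ≥ 0, |a| < r} (α + t |a|) da = α r^n/n! + t n r^(n+1)/(n+1)!`.
-/

open MeasureTheory Set
open scoped ENNReal Nat

def cornerSimplex (n : ℕ) (r : ℝ) : Set (Fin n → ℝ) :=
  {a | (∀ i, 0 ≤ a i) ∧ ∑ i, a i < r}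

theorem measurableSet_cornerSimplex (n : ℕ) (r : ℝ) : MeasurableSet (cornerSimplex n r) := by
  unfold cornerSimplex
  measurability

theorem pos_of_mem_cornerSimplex {n : ℕ} {r : ℝ} {a : Fin n → ℝ} (ha : a ∈ cornerSimplex n r) :
    0 < r :=
  (Finset.sum_nonneg fun i _ => ha.1 i).trans_lt ha.2

theorem cons_mem_cornerSimplex_iff {n : ℕ} {r u : ℝ} {a : Fin n → ℝ} :
    Fin.cons u a ∈ cornerSimplex (n + 1) r ↔ u ∈ Ico 0 r ∧ a ∈ cornerSimplex n (r - u) := by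
  have h : Fin.cons u a ∈ cornerSimplex (n + 1) r ↔ 0 ≤ u ∧ a ∈ cornerSimplex n (r - u) := by
    simp only [cornerSimplex, mem_ofPred_eq, Fin.forall_fin_succ, Fin.cons_zero, Fin.cons_succ,
      Fin.sum_cons, lt_sub_iff_add_lt', and_assoc]
  rw [h, mem_Ico, and_assoc, and_congr_right_iff]
  exact fun _ => ⟨fun ha => ⟨sub_pos.1 (pos_of_mem_cornerSimplex ha), ha⟩, And.right⟩

theorem setLIntegral_cornerSimplex_succ (n : ℕ) (r : ℝ) {f : ℝ → ℝ≥0∞} (hf : Measurable f) :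
    ∫⁻ a in cornerSimplex (n + 1) r, f (∑ i, a i) =
      ∫⁻ u in Ico 0 r, ∫⁻ a in cornerSimplex n (r - u), f (u + ∑ i, a i) := by
  set S : Set (ℝ × (Fin n → ℝ)) := {p | p.1 ∈ Ico 0 r ∧ p.2 ∈ cornerSimplex n (r - p.1)}
  set e := (MeasurableEquiv.piFinSuccAbove (fun _ : Fin (n + 1) => ℝ) 0).symm
  have hcons : MeasurePreserving e := (volume_preserving_piFinSuccAbove _ 0).symm
  have hpre : e ⁻¹' cornerSimplex (n + 1) r = S := by
    ext ⟨u, a⟩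
    simp only [mem_preimage, e, MeasurableEquiv.piFinSuccAbove_symm_apply,
      Fin.insertNthEquiv_zero]
    exact cons_mem_cornerSimplex_iff
  have hS : MeasurableSet S := hpre ▸ e.measurable (measurableSet_cornerSimplex _ _)
  calc ∫⁻ a in cornerSimplex (n + 1) r, f (∑ i, a i)
      = ∫⁻ p in S, f (p.1 + ∑ i, p.2 i) ∂(volume.prod volume) := by
        rw [← hcons.setLIntegral_comp_preimage_emb e.measurableEmbedding, hpre]
        simp only [e, MeasurableEquiv.piFinSuccAbove_symm_apply, Fin.insertNthEquiv_zero,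
          Fin.consEquiv, Equiv.coe_fn_mk, Fin.sum_cons, Measure.volume_eq_prod]
    _ = ∫⁻ u, ∫⁻ a, S.indicator (fun p => f (p.1 + ∑ i, p.2 i)) (u, a) := by
        rw [← lintegral_indicator hS,
          lintegral_prod _ ((by fun_prop : Measurable _).indicator hS).aemeasurable]
    _ = _ := by
        rw [← lintegral_indicator measurableSet_Ico]
        congr 1 with u
        by_cases hu : u ∈ Ico 0 r
        · rw [indicator_of_mem hu, ← lintegral_indicator (measurableSet_cornerSimplex _ _)]
          congr 1 with a
          by_cases ha : a ∈ cornerSimplex n (r - u)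
          · rw [indicator_of_mem ha, indicator_of_mem (show (u, a) ∈ S from ⟨hu, ha⟩)]
          · rw [indicator_of_notMem ha, indicator_of_notMem (fun h : (u, a) ∈ S => ha h.2)]
        · rw [indicator_of_notMem hu]
          convert lintegral_zero with a
          exact indicator_of_notMem (fun h => hu h.1) _

theorem integral_pow_div_factorial (k : ℕ) (r : ℝ) :
    ∫ v in (0 : ℝ)..r, v ^ k / k ! = r ^ (k + 1) / (k + 1)! := by
  rw [intervalIntegral.integral_div, integral_pow, Nat.factorial_succ]
  push_cast
  field_simp
  ring

/-- The integrand is the value of `setLIntegral_cornerSimplex_affine` on the slice `a 0 = u`. -/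
theorem integral_cornerSimplex_slice (n : ℕ) (α t r : ℝ) :
    ∫ u in (0 : ℝ)..r, ((α + t * u) * (r - u) ^ n / n ! + t * n * (r - u) ^ (n + 1) / (n + 1)!) =
      α * r ^ (n + 1) / (n + 1)! + t * (n + 1) * r ^ (n + 2) / (n + 2)! := by
  have hslice : ∀ v : ℝ, (α + t * (r - v)) * v ^ n / n ! + t * n * v ^ (n + 1) / (n + 1)! =
      (α + t * r) * (v ^ n / n !) - t * (v ^ (n + 1) / (n + 1)!) := by
    intro v
    rw [Nat.factorial_succ]
    push_cast
    field_simp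
    ring
  have hreflect := intervalIntegral.integral_comp_sub_left
    (fun v => (α + t * (r - v)) * v ^ n / n ! + t * n * v ^ (n + 1) / (n + 1)!) (a := 0) (b := r) r
  simp only [sub_sub_cancel, sub_self, sub_zero] at hreflect
  rw [hreflect]
  simp_rw [hslice]
  rw [intervalIntegral.integral_sub, intervalIntegral.integral_const_mul,
    intervalIntegral.integral_const_mul, integral_pow_div_factorial, integral_pow_div_factorial]
  · rw [Nat.factorial_succ (n + 1)]
    push_cast
    field_simp
    ring
  all_goals exact (by fun_prop : Continuous _).intervalIntegrable _ _

theorem setLIntegral_cornerSimplex_affine (n : ℕ) {α t r : ℝ} (hα : 0 ≤ α) (ht : 0 ≤ t)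
    (hr : 0 < r) :
    ∫⁻ a in cornerSimplex n r, ENNReal.ofReal (α + t * ∑ i, a i) =
      ENNReal.ofReal (α * r ^ n / n ! + t * n * r ^ (n + 1) / (n + 1)!) := by
  induction n generalizing α r with
  | zero =>
    simp [cornerSimplex, hr, volume_pi]
  | succ n ih =>
    rw [setLIntegral_cornerSimplex_succ n r (f := fun s => ENNReal.ofReal (α + t * s))
      (by fun_prop)]
    have hslice : ∀ u ∈ Ico 0 r,
        ∫⁻ a in cornerSimplex n (r - u), ENNReal.ofReal (α + t * (u + ∑ i, a i)) =
          ENNReal.ofReal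
            ((α + t * u) * (r - u) ^ n / n ! + t * n * (r - u) ^ (n + 1) / (n + 1)!) := by
      intro u hu
      simp_rw [mul_add, ← add_assoc]
      exact ih (add_nonneg hα (mul_nonneg ht hu.1)) (sub_pos.2 hu.2)
    rw [setLIntegral_congr_fun measurableSet_Ico hslice, ← ofReal_integral_eq_lintegral_ofReal,
      integral_Ico_eq_integral_Ioo, ← integral_Ioc_eq_integral_Ioo,
      ← intervalIntegral.integral_of_le hr.le, integral_cornerSimplex_slice]
    · push_cast
      ring_nf
    · exact (by fun_prop : Continuous _).integrableOn_Icc.mono_set Ico_subset_Icc_self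
    · refine (ae_restrict_iff' measurableSet_Ico).2 (.of_forall fun u hu => ?_)
      have hu0 : 0 ≤ u := hu.1
      have hru : 0 ≤ r - u := sub_nonneg.2 hu.2.le
      positivity

theorem volume_region_between_co_eq_lintegral {α : Type*} [MeasurableSpace α] {μ : Measure α}
    [SFinite μ] {f g : α → ℝ} {s : Set α} (hf : Measurable f) (hg : Measurable g)
    (hs : MeasurableSet s) :
    μ.prod volume {p : α × ℝ | p.1 ∈ s ∧ p.2 ∈ Ico (f p.1) (g p.1)} =
      ∫⁻ x in s, ENNReal.ofReal (g x - f x) ∂μ := by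
  rw [Measure.prod_apply (measurableSet_region_between_co hf hg hs), ← lintegral_indicator hs]
  congr 1 with x
  by_cases hx : x ∈ s
  · rw [indicator_of_mem hx, ← Real.volume_Ico]
    congr 1 with y
    simp [hx]
  · rw [indicator_of_notMem hx]
    simp [hx]

/-- For `d ≥ 2` and reals `q ≥ 2`, `c ≥ m ≥ 1`, the Lebesgue measure of
`T = {(a,b) ∈ ℝ_{≥0}^{d-1} × ℝ_{≥0} : |a| + b ≥ m, |a| < 1, b < c - |a|/(q-1)}` equals
`(c - m)/(d-1)! + (d-1)(1 - 1/(q-1))/d!`, where `|a| = a_1 + ⋯ + a_{d-1}`. -/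
theorem volume_T (d : ℕ) (hd : 2 ≤ d) (q c m : ℝ) (hq : 2 ≤ q) (hm : 1 ≤ m) (hcm : m ≤ c) :
    MeasureTheory.volume
        {x : (Fin (d - 1) → ℝ) × ℝ |
          (∀ i, 0 ≤ x.1 i) ∧ 0 ≤ x.2 ∧
          m ≤ (∑ i, x.1 i) + x.2 ∧
          (∑ i, x.1 i) < 1 ∧
          x.2 < c - (∑ i, x.1 i) / (q - 1)} =
      ENNReal.ofReal ((c - m) / (Nat.factorial (d - 1) : ℝ) +
        ((d : ℝ) - 1) * (1 - 1 / (q - 1)) / (Nat.factorial d : ℝ)) := by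
  have ht : 0 ≤ 1 - 1 / (q - 1) := by
    rw [sub_nonneg, div_le_one (by linarith)]
    linarith
  calc _ = volume.prod volume {x : (Fin (d - 1) → ℝ) × ℝ | x.1 ∈ cornerSimplex (d - 1) 1 ∧
          x.2 ∈ Ico (m - ∑ i, x.1 i) (c - (∑ i, x.1 i) / (q - 1))} := by
        rw [Measure.volume_eq_prod]
        congr 1 with ⟨a, b⟩
        simp only [cornerSimplex, mem_ofPred_eq, mem_Ico]
        constructor
        · rintro ⟨ha, -, hmb, ha1, hbc⟩
          exact ⟨⟨ha, ha1⟩, by linarith, hbc⟩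
        · rintro ⟨⟨ha, ha1⟩, hmb, hbc⟩
          exact ⟨ha, by linarith, by linarith, ha1, hbc⟩
    _ = ∫⁻ a in cornerSimplex (d - 1) 1, ENNReal.ofReal (c - m + (1 - 1 / (q - 1)) * ∑ i, a i) := by
        rw [volume_region_between_co_eq_lintegral (f := fun a => m - ∑ i, a i)
          (g := fun a => c - (∑ i, a i) / (q - 1)) (by fun_prop) (by fun_prop)
          (measurableSet_cornerSimplex _ _)]
        congr 1 with a
        ring_nf
    _ = _ := by
        rw [setLIntegral_cornerSimplex_affine (d - 1) (sub_nonneg.2 hcm) ht one_pos]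
        obtain ⟨n, rfl⟩ : ∃ n, d = n + 1 := ⟨d - 1, by omega⟩
        rw [Nat.add_sub_cancel, Nat.factorial_succ, one_pow, one_pow]
        congr 1
        push_cast
        field_simp
        ring
end
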